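/- arXiv:2501.19345 — 3 statements merged into one kernel-verified Lean document; each statement's English description precedes it below -/
import Mathlib

section
/- Identification of the control mean in the censoring setting: E[Y(0)] = E[ 1[O=0]·Y / (g(0|X)·π(0|X)) ] − E[ g(1|X)·1[O=1]·Y / (g(0|X)·π(1|X)) ], where g(d|X) = P(D=d | X, O=0). -/
open MeasureTheory ProbabilityTheory Set

lemma meas_aux {Ω : Type*} [mΩ : MeasurableSpace Ω] (ν : Measure Ω)
    [IsProbabilityMeasure ν] {W : Ω → ℝ} (hWm : Measurable W)
    {B : Set Ω} (hB : MeasurableSet B)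
    (hω : ∀ q : ℚ, ν (W ⁻¹' Iio (q : ℝ) ∩ B) = ν (W ⁻¹' Iio (q : ℝ)) * ν B) :
    ∫ y, B.indicator W y ∂ν = (ν B).toReal * ∫ y, W y ∂ν := by
  have hmeq : Measure.map W (ν.restrict B) = ν B • Measure.map W ν := by
    refine MeasureTheory.ext_of_generate_finite _
      (by rw [BorelSpace.measurable_eq (α := ℝ)]
          exact Real.borel_eq_generateFrom_Iio_rat)
      Real.isPiSystem_Iio_rat ?_ ?_
    · rintro s hs
      simp only [Set.mem_iUnion, Set.mem_singleton_iff] at hs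
      obtain ⟨q, rfl⟩ := hs
      rw [Measure.map_apply hWm measurableSet_Iio,
        Measure.restrict_apply (hWm measurableSet_Iio), hω q,
        Measure.smul_apply, Measure.map_apply hWm measurableSet_Iio,
        smul_eq_mul, mul_comm]
    · rw [Measure.map_apply hWm MeasurableSet.univ, Measure.smul_apply,
        Measure.map_apply hWm MeasurableSet.univ]
      simp [Measure.restrict_apply MeasurableSet.univ]
  calc ∫ y, B.indicator W y ∂ν
      = ∫ y in B, W y ∂ν := integral_indicator hB
    _ = ∫ x, id x ∂(Measure.map W (ν.restrict B)) :=
        (integral_map hWm.aemeasurable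
          stronglyMeasurable_id.aestronglyMeasurable).symm
    _ = ∫ x, id x ∂(ν B • Measure.map W ν) := by rw [hmeq]
    _ = (ν B).toReal * ∫ x, id x ∂(Measure.map W ν) := by
        rw [integral_smul_measure]; rfl
    _ = (ν B).toReal * ∫ y, W y ∂ν := by
        rw [integral_map hWm.aemeasurable
          stronglyMeasurable_id.aestronglyMeasurable]; rfl

/-- Key lemma: under conditional independence, the conditional expectation of
`1_{V ∈ t} · W` factorizes. -/
lemma key_factorize {Ω : Type*} [mΩ : MeasurableSpace Ω] [StandardBorelSpace Ω]
    {μ : Measure Ω} [IsProbabilityMeasure μ]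
    {W : Ω → ℝ} (hWm : Measurable W) (hW : Integrable W μ)
    {β : Type*} [mβ : MeasurableSpace β] {V : Ω → β} (hV : Measurable V)
    {t : Set β} (ht : MeasurableSet t)
    {m : MeasurableSpace Ω} (hm : m ≤ mΩ)
    (hCI : CondIndepFun m hm W V μ) :
    μ[(V ⁻¹' t).indicator W | m]
      =ᵐ[μ] fun ω => (μ⟦V ⁻¹' t | m⟧) ω * (μ[W | m]) ω := by
  have hB : MeasurableSet[mΩ] (V ⁻¹' t) := hV ht
  have hCI' : ProbabilityTheory.Kernel.IndepFun W V
      (condExpKernel (mΩ := mΩ) μ m) (μ.trim hm) := hCI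
  have hind : ∀ q : ℚ, ∀ᵐ ω ∂μ,
      condExpKernel (mΩ := mΩ) μ m ω (W ⁻¹' Iio (q : ℝ) ∩ V ⁻¹' t)
        = condExpKernel (mΩ := mΩ) μ m ω (W ⁻¹' Iio (q : ℝ))
          * condExpKernel (mΩ := mΩ) μ m ω (V ⁻¹' t) := fun q =>
    ae_of_ae_trim hm
      (hCI'.measure_inter_preimage_eq_mul (Iio (q : ℝ)) t measurableSet_Iio ht)
  have hmain : ∀ᵐ ω ∂μ, ∫ y, (V ⁻¹' t).indicator W y ∂(condExpKernel (mΩ := mΩ) μ m ω)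
      = (condExpKernel (mΩ := mΩ) μ m ω (V ⁻¹' t)).toReal
        * ∫ y, W y ∂(condExpKernel (mΩ := mΩ) μ m ω) := by
    filter_upwards [ae_all_iff.2 hind] with ω hω
    exact meas_aux (mΩ := mΩ) _ hWm hB hω
  have hBint : Integrable ((V ⁻¹' t).indicator W) μ := Integrable.indicator (mα := mΩ) (f := W) (μ := μ) hW hB
  have h1 := condExp_ae_eq_integral_condExpKernel (mΩ := mΩ) hm hBint
  have h2 := condExp_ae_eq_integral_condExpKernel (mΩ := mΩ) hm hW
  have h3 := condExpKernel_ae_eq_condExp (mΩ := mΩ) (μ := μ) hm hB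
  filter_upwards [h1, h2, h3, hmain] with ω e1 e2 e3 e4
  rw [e1, e4, ← measureReal_def, e3, ← e2]

/-- Pull-out lemma for integrals against an a.e. bounded, a.e. `m`-measurable weight. -/
lemma pullout_integral {Ω : Type*} [mΩ : MeasurableSpace Ω]
    {μ : Measure Ω} [IsProbabilityMeasure μ]
    {F h h' : Ω → ℝ} (hF : Integrable F μ) {C : ℝ}
    {m : MeasurableSpace Ω} (hm : m ≤ mΩ)
    (hh'm : StronglyMeasurable[m] h') (hhh' : h =ᵐ[μ] h')
    (hbound : ∀ᵐ ω ∂μ, |h ω| ≤ C) :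
    ∫ ω, F ω * h ω ∂μ = ∫ ω, (μ[F|m]) ω * h' ω ∂μ := by
  haveI : SigmaFinite (μ.trim hm) := by
    have := isFiniteMeasure_trim (μ := μ) hm
    infer_instance
  have hbound' : ∀ᵐ ω ∂μ, ‖h' ω‖ ≤ C := by
    filter_upwards [hbound, hhh'] with ω h1 h2
    rw [← h2]; exact h1
  have hint : Integrable (h' * F) μ :=
    hF.bdd_mul ((hh'm.mono hm).aestronglyMeasurable) hbound'
  calc ∫ ω, F ω * h ω ∂μ
      = ∫ ω, h' ω * F ω ∂μ := integral_congr_ae (by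
        filter_upwards [hhh'] with ω e
        rw [e, mul_comm])
    _ = ∫ ω, (μ[h' * F|m]) ω ∂μ := (integral_condExp hm).symm
    _ = ∫ ω, (h' * μ[F|m]) ω ∂μ :=
        integral_congr_ae (condExp_mul_of_stronglyMeasurable_left hh'm hint hF)
    _ = ∫ ω, (μ[F|m]) ω * h' ω ∂μ :=
        integral_congr_ae (Filter.Eventually.of_forall fun ω => mul_comm _ _)
/-- Identification of the control mean in the censoring setting:
`E[Y(0)] = E[1[O=0]·Y/(g(0|X)π(0|X))] − E[g(1|X)·1[O=1]·Y/(g(0|X)π(1|X))]`. -/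
theorem censoring_control_mean_identification
    {Ω 𝒳 : Type*} [MeasurableSpace Ω] [StandardBorelSpace Ω]
    [m𝒳 : MeasurableSpace 𝒳]
    (P : Measure Ω) [IsProbabilityMeasure P]
    (X : Ω → 𝒳) (hX : Measurable X)
    (O D : Ω → Bool) (hO : Measurable O) (hD : Measurable D)
    (Y1 Y0 : Ω → ℝ) (hY1m : Measurable Y1) (hY0m : Measurable Y0)
    (hY1 : Integrable Y1 P) (hY0 : Integrable Y0 P)
    -- unconfoundedness: (Y(1),Y(0)) ⊥ (O,D) | X
    (hunconf : CondIndepFun (MeasurableSpace.comap X m𝒳) hX.comap_le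
      (fun ω => (Y1 ω, Y0 ω)) (fun ω => (O ω, D ω)) P)
    (π : Bool → 𝒳 → ℝ) (g : Bool → 𝒳 → ℝ)
    -- π(o|X) = P(O = o | X)
    (hπ : ∀ o : Bool,
      P[(fun ω => if O ω = o then (1:ℝ) else 0) | MeasurableSpace.comap X m𝒳]
      =ᵐ[P] fun ω => π o (X ω))
    -- g(d|X) = P(D = d | X, O = 0): E[1[O=0]·1[D=d]|X] = g(d|X)·π(0|X)
    (hg : ∀ d : Bool,
      P[(fun ω => (if O ω then (0:ℝ) else 1) * (if D ω = d then (1:ℝ) else 0))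
        | MeasurableSpace.comap X m𝒳]
      =ᵐ[P] fun ω => g d (X ω) * π false (X ω))
    -- common support
    (c : ℝ) (hc : 0 < c)
    (hπc : ∀ (o : Bool) (x : 𝒳), c < π o x)
    (hgc : ∀ (d : Bool) (x : 𝒳), c < g d x) :
    ∫ ω, Y0 ω ∂P
      = (∫ ω, (if O ω then (0:ℝ)
              else (if O ω then Y1 ω else (if D ω then Y1 ω else Y0 ω)))
            / (g false (X ω) * π false (X ω)) ∂P)
        - ∫ ω, g true (X ω)
              * (if O ω then (if O ω then Y1 ω else (if D ω then Y1 ω else Y0 ω)) else 0)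
            / (g false (X ω) * π true (X ω)) ∂P := by
  classical
  haveI hSF : SigmaFinite (P.trim hX.comap_le) := by
    have := isFiniteMeasure_trim (μ := P) hX.comap_le
    infer_instance
  have hV : Measurable (fun ω => (O ω, D ω)) := hO.prodMk hD
  -- conditional independence for components
  have hc00 : CondIndepFun (MeasurableSpace.comap X m𝒳) hX.comap_le Y0
      (fun ω => (O ω, D ω)) P :=
    hunconf.comp (φ := Prod.snd) (ψ := id) measurable_snd measurable_id
  have hc01 : CondIndepFun (MeasurableSpace.comap X m𝒳) hX.comap_le Y1
      (fun ω => (O ω, D ω)) P :=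
    hunconf.comp (φ := Prod.fst) (ψ := id) measurable_fst measurable_id
  have hcO : CondIndepFun (MeasurableSpace.comap X m𝒳) hX.comap_le Y1 O P :=
    hunconf.comp (φ := Prod.fst) (ψ := Prod.fst) measurable_fst measurable_fst
  -- indicator identifications
  have hgind : ∀ d : Bool,
      (fun ω => (if O ω then (0:ℝ) else 1) * (if D ω = d then (1:ℝ) else 0))
        = ((fun ω => (O ω, D ω)) ⁻¹' {(false, d)}).indicator (fun _ => (1:ℝ)) := by
    intro d; funext ω
    cases hO' : O ω <;> by_cases h2 : D ω = d <;>
      simp [Set.indicator_apply, Set.mem_preimage, Set.mem_singleton_iff,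
        Prod.mk.injEq, hO', h2]
  have hπind :
      (fun ω => if O ω = true then (1:ℝ) else 0)
        = (O ⁻¹' {true}).indicator (fun _ => (1:ℝ)) := by
    funext ω
    cases hO' : O ω <;> simp [Set.indicator_apply, hO']
  have e_g : ∀ d : Bool,
      P⟦(fun ω => (O ω, D ω)) ⁻¹' {(false, d)} | MeasurableSpace.comap X m𝒳⟧
        =ᵐ[P] fun ω => g d (X ω) * π false (X ω) := by
    intro d; rw [← hgind d]; exact hg d
  have e_π1 : P⟦O ⁻¹' {true} | MeasurableSpace.comap X m𝒳⟧
      =ᵐ[P] fun ω => π true (X ω) := by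
    rw [← hπind]; exact hπ true
  -- key factorizations
  have K00 := key_factorize hY0m hY0 hV
    (measurableSet_singleton ((false : Bool), (false : Bool))) hX.comap_le hc00
  have K01 := key_factorize hY1m hY1 hV
    (measurableSet_singleton ((false : Bool), (true : Bool))) hX.comap_le hc01
  have K1 := key_factorize hY1m hY1 hO
    (measurableSet_singleton true) hX.comap_le hcO
  -- integrabilities
  have IF00 : Integrable (((fun ω => (O ω, D ω)) ⁻¹' {((false : Bool), (false : Bool))}).indicator Y0) P :=
    hY0.indicator (hV (measurableSet_singleton _))
  have IF01 : Integrable (((fun ω => (O ω, D ω)) ⁻¹' {((false : Bool), (true : Bool))}).indicator Y1) P :=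
    hY1.indicator (hV (measurableSet_singleton _))
  have IF1 : Integrable ((O ⁻¹' {true}).indicator Y1) P :=
    hY1.indicator (hO (measurableSet_singleton _))
  -- positivity
  have hc2 : (0:ℝ) < c * c := mul_pos hc hc
  have hgt : ∀ (d : Bool) (x : 𝒳), (0:ℝ) < g d x := fun d x => hc.trans (hgc d x)
  have hπt : ∀ (o : Bool) (x : 𝒳), (0:ℝ) < π o x := fun o x => hc.trans (hπc o x)
  -- a.e. bound g1·π0 ≤ 1
  have hintg : ∀ d : Bool, Integrable
      (fun ω => (if O ω then (0:ℝ) else 1) * (if D ω = d then (1:ℝ) else 0)) P := by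
    intro d; rw [hgind d]
    exact (integrable_const (1:ℝ)).indicator (hV (measurableSet_singleton _))
  have hle1 : ∀ᵐ ω ∂P, g true (X ω) * π false (X ω) ≤ 1 := by
    have hmono := condExp_mono (m := MeasurableSpace.comap X m𝒳) (hintg true)
      (integrable_const (1:ℝ))
      (Filter.Eventually.of_forall (fun ω => by
        cases hO' : O ω <;> by_cases h2 : D ω = true <;> simp [hO', h2]))
    rw [condExp_const hX.comap_le] at hmono
    filter_upwards [hmono, hg true] with ω h1 h2
    rw [← h2]; exact h1
  -- the weights
  set h1fun : Ω → ℝ := fun ω => (g false (X ω) * π false (X ω))⁻¹ with hh1def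
  set h2fun : Ω → ℝ := fun ω => g true (X ω) * (g false (X ω) * π true (X ω))⁻¹ with hh2def
  set E0 : Ω → ℝ := P[(fun ω => (if O ω then (0:ℝ) else 1) * (if D ω = false then (1:ℝ) else 0))
      | MeasurableSpace.comap X m𝒳] with hE0
  set E1 : Ω → ℝ := P[(fun ω => (if O ω then (0:ℝ) else 1) * (if D ω = true then (1:ℝ) else 0))
      | MeasurableSpace.comap X m𝒳] with hE1
  set Eπ0 : Ω → ℝ := P[(fun ω => if O ω = false then (1:ℝ) else 0)
      | MeasurableSpace.comap X m𝒳] with hEπ0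
  set Eπ1 : Ω → ℝ := P[(fun ω => if O ω = true then (1:ℝ) else 0)
      | MeasurableSpace.comap X m𝒳] with hEπ1
  have hh1'm : StronglyMeasurable[MeasurableSpace.comap X m𝒳] E0⁻¹ :=
    stronglyMeasurable_condExp.measurable.inv.stronglyMeasurable
  have hh2'm : StronglyMeasurable[MeasurableSpace.comap X m𝒳]
      (E1 * Eπ0⁻¹ * (E0 * Eπ0⁻¹ * Eπ1)⁻¹) :=
    ((stronglyMeasurable_condExp.measurable.mul
        stronglyMeasurable_condExp.measurable.inv).mul
      ((stronglyMeasurable_condExp.measurable.mul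
          stronglyMeasurable_condExp.measurable.inv).mul
        stronglyMeasurable_condExp.measurable).inv).stronglyMeasurable
  have hhh1 : h1fun =ᵐ[P] E0⁻¹ := by
    filter_upwards [hg false] with ω e
    simp only [Pi.inv_apply, hh1def]
    rw [hE0, e]
  have hhh2 : h2fun =ᵐ[P] E1 * Eπ0⁻¹ * (E0 * Eπ0⁻¹ * Eπ1)⁻¹ := by
    filter_upwards [hg true, hg false, hπ false, hπ true] with ω e1 e2 e3 e4
    simp only [Pi.mul_apply, Pi.inv_apply, hh2def]
    rw [hE1, hEπ0, hE0, hEπ1, e1, e2, e3, e4]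
    have hp0 : π false (X ω) ≠ 0 := (hπt false _).ne'
    have hp1 : π true (X ω) ≠ 0 := (hπt true _).ne'
    have hg0 : g false (X ω) ≠ 0 := (hgt false _).ne'
    have hg1 : g true (X ω) ≠ 0 := (hgt true _).ne'
    field_simp
    try ring
  have hbd1 : ∀ᵐ ω ∂P, |h1fun ω| ≤ (c*c)⁻¹ := by
    refine Filter.Eventually.of_forall (fun ω => ?_)
    have hlt : c * c < g false (X ω) * π false (X ω) :=
      mul_lt_mul'' (hgc _ _) (hπc _ _) hc.le hc.le
    simp only [hh1def]
    rw [abs_inv, abs_of_pos (hc2.trans hlt)]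
    exact inv_anti₀ hc2 hlt.le
  have hbd2 : ∀ᵐ ω ∂P, |h2fun ω| ≤ c⁻¹ * (c*c)⁻¹ := by
    filter_upwards [hle1] with ω hb
    have hg1le : g true (X ω) ≤ c⁻¹ := by
      have h1 : g true (X ω) ≤ 1 / π false (X ω) :=
        (le_div_iff₀ (hπt false _)).mpr hb
      rw [one_div] at h1
      exact h1.trans (inv_anti₀ hc (hπc false _).le)
    have hdlt : c * c < g false (X ω) * π true (X ω) :=
      mul_lt_mul'' (hgc _ _) (hπc _ _) hc.le hc.le
    have hd : (g false (X ω) * π true (X ω))⁻¹ ≤ (c*c)⁻¹ :=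
      inv_anti₀ hc2 hdlt.le
    simp only [hh2def]
    rw [abs_of_pos (mul_pos (hgt true _) (inv_pos.mpr (hc2.trans hdlt)))]
    exact mul_le_mul hg1le hd (inv_pos.mpr (hc2.trans hdlt)).le (inv_pos.mpr hc).le
  -- pull-out steps
  have E1a := pullout_integral IF00 hX.comap_le hh1'm hhh1 hbd1
  have E1b := pullout_integral IF01 hX.comap_le hh1'm hhh1 hbd1
  have E2a := pullout_integral IF1 hX.comap_le hh2'm hhh2 hbd2
  -- chains
  have chain1 : ∫ ω, (P[((fun ω => (O ω, D ω)) ⁻¹' {((false : Bool), (false : Bool))}).indicator Y0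
        | MeasurableSpace.comap X m𝒳]) ω * (E0⁻¹) ω ∂P
      = ∫ ω, (P[Y0 | MeasurableSpace.comap X m𝒳]) ω ∂P := by
    refine integral_congr_ae ?_
    filter_upwards [K00, e_g false, hg false] with ω e1 e2 e3
    simp only [Pi.inv_apply]
    rw [e1, e2, hE0, e3]
    have hne : g false (X ω) * π false (X ω) ≠ 0 :=
      (mul_pos (hgt false _) (hπt false _)).ne'
    rw [mul_right_comm, mul_inv_cancel₀ hne, one_mul]
  have chain2 : ∫ ω, (P[((fun ω => (O ω, D ω)) ⁻¹' {((false : Bool), (true : Bool))}).indicator Y1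
        | MeasurableSpace.comap X m𝒳]) ω * (E0⁻¹) ω ∂P
      = ∫ ω, (g true (X ω) * (g false (X ω))⁻¹) * (P[Y1 | MeasurableSpace.comap X m𝒳]) ω ∂P := by
    refine integral_congr_ae ?_
    filter_upwards [K01, e_g true, hg false] with ω e1 e2 e3
    simp only [Pi.inv_apply]
    rw [e1, e2, hE0, e3]
    have hp0 : π false (X ω) ≠ 0 := (hπt false _).ne'
    have hg0 : g false (X ω) ≠ 0 := (hgt false _).ne'
    field_simp
    try ring
  have chain3 : ∫ ω, (P[(O ⁻¹' {true}).indicator Y1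
        | MeasurableSpace.comap X m𝒳]) ω * (E1 * Eπ0⁻¹ * (E0 * Eπ0⁻¹ * Eπ1)⁻¹) ω ∂P
      = ∫ ω, (g true (X ω) * (g false (X ω))⁻¹) * (P[Y1 | MeasurableSpace.comap X m𝒳]) ω ∂P := by
    refine integral_congr_ae ?_
    filter_upwards [K1, e_π1, hg true, hg false, hπ false, hπ true] with ω e1 e2 e3 e4 e5 e6
    simp only [Pi.mul_apply, Pi.inv_apply]
    rw [e1, e2, hE1, hEπ0, hE0, hEπ1, e3, e4, e5, e6]
    have hp0 : π false (X ω) ≠ 0 := (hπt false _).ne'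
    have hp1 : π true (X ω) ≠ 0 := (hπt true _).ne'
    have hg0 : g false (X ω) ≠ 0 := (hgt false _).ne'
    field_simp
    try ring
  -- transforms of the target integrals
  have hT1 : ∫ ω, (if O ω then (0:ℝ)
              else (if O ω then Y1 ω else (if D ω then Y1 ω else Y0 ω)))
            / (g false (X ω) * π false (X ω)) ∂P
      = ∫ ω, (((fun ω => (O ω, D ω)) ⁻¹' {((false : Bool), (false : Bool))}).indicator Y0 ω
            + ((fun ω => (O ω, D ω)) ⁻¹' {((false : Bool), (true : Bool))}).indicator Y1 ω)
          * h1fun ω ∂P := by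
    refine integral_congr_ae (Filter.Eventually.of_forall (fun ω => ?_))
    simp only [hh1def]
    cases hO' : O ω <;> cases hD' : D ω <;>
      simp [Set.indicator_apply, Set.mem_preimage, Set.mem_singleton_iff,
        Prod.mk.injEq, hO', hD', div_eq_mul_inv]
  have hT2 : ∫ ω, g true (X ω)
              * (if O ω then (if O ω then Y1 ω else (if D ω then Y1 ω else Y0 ω)) else 0)
            / (g false (X ω) * π true (X ω)) ∂P
      = ∫ ω, (O ⁻¹' {true}).indicator Y1 ω * h2fun ω ∂P := by
    refine integral_congr_ae (Filter.Eventually.of_forall (fun ω => ?_))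
    simp only [hh2def]
    cases hO' : O ω
    · simp [Set.indicator_apply, hO', div_eq_mul_inv]
    · simp [Set.indicator_apply, hO', div_eq_mul_inv]
      ring
  -- integrability of products
  have hASM1 : AEStronglyMeasurable h1fun P :=
    ((hh1'm.mono hX.comap_le).aestronglyMeasurable).congr hhh1.symm
  have hprod1 : ∀ {F : Ω → ℝ}, Integrable F P → Integrable (fun ω => F ω * h1fun ω) P := by
    intro F hF
    have := hF.bdd_mul (c := (c*c)⁻¹) hASM1
      (by filter_upwards [hbd1] with ω h; simpa [Real.norm_eq_abs] using h)
    exact this.congr (Filter.Eventually.of_forall fun ω => mul_comm _ _)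
  have hsplit : ∫ ω, (((fun ω => (O ω, D ω)) ⁻¹' {((false : Bool), (false : Bool))}).indicator Y0 ω
            + ((fun ω => (O ω, D ω)) ⁻¹' {((false : Bool), (true : Bool))}).indicator Y1 ω)
          * h1fun ω ∂P
      = (∫ ω, ((fun ω => (O ω, D ω)) ⁻¹' {((false : Bool), (false : Bool))}).indicator Y0 ω
          * h1fun ω ∂P)
        + ∫ ω, ((fun ω => (O ω, D ω)) ⁻¹' {((false : Bool), (true : Bool))}).indicator Y1 ω
          * h1fun ω ∂P := by
    rw [← integral_add (hprod1 IF00) (hprod1 IF01)]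
    refine integral_congr_ae (Filter.Eventually.of_forall (fun ω => ?_))
    ring
  have hY0int := integral_condExp (μ := P) (f := Y0) hX.comap_le
  -- final assembly
  rw [hT1, hsplit, E1a, E1b, chain1, chain2, hY0int, hT2, E2a, chain3]
  ring
end

section
/- The efficient influence function in the censoring setting has mean zero: E[ Ψ_cens(X,O,Y) ] = 0, where Ψ_cens(X,O,Y) = 1[O=1](Y − μ_T(X))/π(1|X) − 1[O=0](Y − ν(X))/(g(0|X)π(0|X)) + g(1|X)·1[O=1](Y − μ_T(X))/(g(0|X)π(1|X)) + μ_T(X) − ν(X)/g(0|X) + g(1|X)μ_T(X)/g(0|X) − τ, and τ = E[Y(1) − Y(0)]. -/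
open MeasureTheory ProbabilityTheory

/-- The uncentered estimating function `S_cens` from the censoring setting. -/
noncomputable def Scens {Ω 𝒳 : Type*} (X : Ω → 𝒳) (O : Ω → Bool) (Y : Ω → ℝ)
    (μ ν : 𝒳 → ℝ) (π g : Bool → 𝒳 → ℝ) (ω : Ω) : ℝ :=
  (if O ω then Y ω - μ (X ω) else 0) / π true (X ω)
    - (if O ω then 0 else Y ω - ν (X ω)) / (g false (X ω) * π false (X ω))
    + g true (X ω) * (if O ω then Y ω - μ (X ω) else 0) / (g false (X ω) * π true (X ω))
    + μ (X ω) - ν (X ω) / g false (X ω) + g true (X ω) * μ (X ω) / g false (X ω)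

set_option linter.unusedSectionVars false
set_option maxHeartbeats 1000000

namespace CensAux

section Helpers

variable {Ω : Type*} {m : MeasurableSpace Ω} [mΩ : MeasurableSpace Ω]

lemma aesm_mul {P : Measure Ω} {f g : Ω → ℝ} (hf : AEStronglyMeasurable[m] f P)
    (hg : AEStronglyMeasurable[m] g P) :
    AEStronglyMeasurable[m] (fun ω => f ω * g ω) P :=
  ⟨fun ω => hf.mk f ω * hg.mk g ω, hf.stronglyMeasurable_mk.mul hg.stronglyMeasurable_mk,
    hf.ae_eq_mk.mul hg.ae_eq_mk⟩

lemma aesm_inv {P : Measure Ω} {f : Ω → ℝ} (hf : AEStronglyMeasurable[m] f P) :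
    AEStronglyMeasurable[m] (fun ω => (f ω)⁻¹) P :=
  ⟨fun ω => (hf.mk f ω)⁻¹, (hf.stronglyMeasurable_mk.measurable.inv).stronglyMeasurable,
    hf.ae_eq_mk.inv⟩

lemma aesm_top {P : Measure Ω} {f : Ω → ℝ} (hm : m ≤ mΩ) (hf : AEStronglyMeasurable[m] f P) :
    AEStronglyMeasurable f P :=
  ((hf.stronglyMeasurable_mk.mono hm).aestronglyMeasurable).congr hf.ae_eq_mk.symm

lemma integral_mul_condexp (hm : m ≤ mΩ) (P : Measure Ω) [IsProbabilityMeasure P]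
    {W Z : Ω → ℝ} (hW : AEStronglyMeasurable[m] W P) (hZ : Integrable Z P)
    (hWZ : Integrable (fun ω => W ω * Z ω) P) :
    ∫ ω, W ω * Z ω ∂P = ∫ ω, W ω * (P[Z|m]) ω ∂P := by
  have h := condExp_mul_of_aestronglyMeasurable_left hW hWZ hZ
  calc ∫ ω, W ω * Z ω ∂P
      = ∫ ω, (P[fun ω => W ω * Z ω|m]) ω ∂P :=
        (integral_condExp (μ := P) (f := fun ω => W ω * Z ω) hm).symm
    _ = ∫ ω, W ω * (P[Z|m]) ω ∂P := integral_congr_ae (h.mono fun ω hω => hω)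

end Helpers

lemma key_ci {Ω 𝒳 : Type*} [mΩ : MeasurableSpace Ω] [StandardBorelSpace Ω]
    [m𝒳 : MeasurableSpace 𝒳]
    (P : Measure Ω) [IsProbabilityMeasure P]
    (X : Ω → 𝒳) (hX : Measurable X)
    (O D : Ω → Bool) (hO : Measurable O) (hD : Measurable D)
    (Y1 Y0 : Ω → ℝ) (hY1m : Measurable Y1) (hY0m : Measurable Y0)
    (hunconf : CondIndepFun (MeasurableSpace.comap X m𝒳) hX.comap_le
      (fun ω => (Y1 ω, Y0 ω)) (fun ω => (O ω, D ω)) P)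
    (t : Set (Bool × Bool)) (ψ : ℝ × ℝ → ℝ) (hψ : Measurable ψ)
    (hint : Integrable (fun ω => ψ (Y1 ω, Y0 ω)) P) :
    P[((fun ω => (O ω, D ω)) ⁻¹' t).indicator (fun ω => ψ (Y1 ω, Y0 ω))
        | MeasurableSpace.comap X m𝒳]
      =ᵐ[P] fun ω =>
        (P[((fun ω' => (O ω', D ω')) ⁻¹' t).indicator (fun _ => (1:ℝ))
            | MeasurableSpace.comap X m𝒳]) ω
          * (P[(fun ω' => ψ (Y1 ω', Y0 ω')) | MeasurableSpace.comap X m𝒳]) ω := by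
  have hm : MeasurableSpace.comap X m𝒳 ≤ mΩ := hX.comap_le
  set Z : Ω → ℝ × ℝ := fun ω => (Y1 ω, Y0 ω) with hZdef
  set W : Ω → Bool × Bool := fun ω => (O ω, D ω) with hWdef
  have hZ : Measurable[mΩ] Z := hY1m.prodMk hY0m
  have hW : Measurable[mΩ] W := hO.prodMk hD
  have ht : MeasurableSet t := (Set.toFinite t).measurableSet
  set B : Set Ω := W ⁻¹' t with hBdef
  have hB : MeasurableSet[mΩ] B := hW ht
  -- countable generating π-system of ℝ × ℝ
  set C : Set (Set ℝ) := ⋃ q : ℚ, {Set.Iic (q : ℝ)} with hCdef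
  set 𝒞 : Set (Set (ℝ × ℝ)) := Set.image2 (· ×ˢ ·) C C with h𝒞def
  have hCc : C.Countable := Set.countable_iUnion fun q => Set.countable_singleton _
  have h𝒞c : 𝒞.Countable := hCc.image2 hCc _
  have h𝒞pi : IsPiSystem 𝒞 := by
    rintro s1 ⟨u1, hu1, v1, hv1, rfl⟩ s2 ⟨u2, hu2, v2, hv2, rfl⟩ hne
    simp only [hCdef, Set.mem_iUnion, Set.mem_singleton_iff] at hu1 hv1 hu2 hv2
    obtain ⟨a1, rfl⟩ := hu1; obtain ⟨b1, rfl⟩ := hv1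
    obtain ⟨a2, rfl⟩ := hu2; obtain ⟨b2, rfl⟩ := hv2
    refine ⟨Set.Iic ((min a1 a2 : ℚ) : ℝ), Set.mem_iUnion.2 ⟨min a1 a2, rfl⟩,
      Set.Iic ((min b1 b2 : ℚ) : ℝ), Set.mem_iUnion.2 ⟨min b1 b2, rfl⟩, ?_⟩
    rw [Set.prod_inter_prod, Set.Iic_inter_Iic, Set.Iic_inter_Iic]
    push_cast [Rat.cast_min]
    rfl
  have hCspan : IsCountablySpanning C := by
    refine ⟨fun n => Set.Iic ((n : ℚ) : ℝ), fun n => Set.mem_iUnion.2 ⟨n, rfl⟩, ?_⟩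
    ext x
    simp only [Set.mem_iUnion, Set.mem_Iic, Set.mem_univ, iff_true]
    obtain ⟨n, hn⟩ := exists_nat_ge x
    exact ⟨n, by push_cast; exact hn⟩
  have hCmeas : ∀ s ∈ 𝒞, MeasurableSet s := by
    rintro s ⟨u, hu, v, hv, rfl⟩
    simp only [hCdef, Set.mem_iUnion, Set.mem_singleton_iff] at hu hv
    obtain ⟨a, rfl⟩ := hu; obtain ⟨b, rfl⟩ := hv
    exact measurableSet_Iic.prod measurableSet_Iic
  have hgen : (Prod.instMeasurableSpace : MeasurableSpace (ℝ × ℝ))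
      = MeasurableSpace.generateFrom 𝒞 := by
    have hR : (inferInstance : MeasurableSpace ℝ) = MeasurableSpace.generateFrom C :=
      BorelSpace.measurable_eq.trans Real.borel_eq_generateFrom_Iic_rat
    have h := generateFrom_prod_eq hCspan hCspan
    rw [← hR] at h
    rw [h𝒞def]
    exact h
  -- kernel facts
  set κ := condExpKernel (mΩ := mΩ) P (MeasurableSpace.comap X m𝒳) with hκdef
  have hker : ∀ s ∈ 𝒞, ∀ᵐ ω ∂P, κ ω (Z ⁻¹' s ∩ B) = κ ω (Z ⁻¹' s) * κ ω B := by
    intro s hs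
    exact ae_of_ae_trim hm (hunconf.measure_inter_preimage_eq_mul s t (hCmeas s hs) ht)
  have h5 : ∀ᵐ ω ∂P, ∀ s ∈ 𝒞, κ ω (Z ⁻¹' s ∩ B) = κ ω (Z ⁻¹' s) * κ ω B :=
    (ae_ball_iff h𝒞c).2 hker
  have hq : ∀ᵐ ω ∂P, Integrable (fun ω' => ψ (Z ω')) (κ ω) := Integrable.condExpKernel_ae (m := MeasurableSpace.comap X m𝒳) (mΩ := mΩ) hint
  have hmain : ∀ᵐ ω ∂P, ∫ ω', B.indicator (fun ω'' => ψ (Z ω'')) ω' ∂(κ ω)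
      = (κ ω B).toReal * ∫ ω', ψ (Z ω') ∂(κ ω) := by
    filter_upwards [h5, hq] with ω hω5 hωq
    have hmap : Measure.map Z ((κ ω).restrict B) = κ ω B • Measure.map Z (κ ω) := by
      haveI : IsFiniteMeasure (Measure.map Z ((κ ω).restrict B)) := by
        constructor
        rw [Measure.map_apply hZ MeasurableSet.univ]
        exact measure_lt_top _ _
      haveI : IsFiniteMeasure (κ ω B • Measure.map Z (κ ω)) := by
        constructor
        rw [Measure.smul_apply, Measure.map_apply hZ MeasurableSet.univ, smul_eq_mul]
        exact ENNReal.mul_lt_top (measure_lt_top _ _) (measure_lt_top _ _)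
      refine ext_of_generate_finite 𝒞 hgen h𝒞pi (fun s hs => ?_) ?_
      · rw [Measure.map_apply hZ (hCmeas s hs), Measure.restrict_apply (hZ (hCmeas s hs)),
          Measure.smul_apply, Measure.map_apply hZ (hCmeas s hs), smul_eq_mul, mul_comm]
        exact hω5 s hs
      · rw [Measure.map_apply hZ MeasurableSet.univ, Set.preimage_univ,
          Measure.restrict_apply MeasurableSet.univ, Set.univ_inter, Measure.smul_apply,
          Measure.map_apply hZ MeasurableSet.univ, Set.preimage_univ, measure_univ,
          smul_eq_mul, mul_one]
    calc ∫ ω', B.indicator (fun ω'' => ψ (Z ω'')) ω' ∂(κ ω)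
        = ∫ ω' in B, ψ (Z ω') ∂(κ ω) := integral_indicator hB
      _ = ∫ y, ψ y ∂(Measure.map Z ((κ ω).restrict B)) :=
          (integral_map hZ.aemeasurable hψ.aestronglyMeasurable).symm
      _ = (κ ω B).toReal • ∫ y, ψ y ∂(Measure.map Z (κ ω)) := by
          rw [hmap, integral_smul_measure]
      _ = (κ ω B).toReal * ∫ ω', ψ (Z ω') ∂(κ ω) := by
          rw [integral_map hZ.aemeasurable hψ.aestronglyMeasurable, smul_eq_mul]
  have e1 := condExp_ae_eq_integral_condExpKernel (mΩ := mΩ) hm (hint.indicator hB)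
  have e2 := condExpKernel_ae_eq_condExp (μ := P) (mΩ := mΩ) hm hB
  have e3 := condExp_ae_eq_integral_condExpKernel (mΩ := mΩ) hm hint
  filter_upwards [e1, e2, e3, hmain] with ω h1 h2 h3 h4
  rw [h1, h4, ← h2, h3]
  rfl

end CensAux

open CensAux in
/-- The efficient influence function in the censoring setting has mean zero:
`E[Ψ_cens] = E[S_cens] − τ = 0` with `τ = E[Y(1) − Y(0)]`. -/
theorem censoring_eif_mean_zero
    {Ω 𝒳 : Type*} [MeasurableSpace Ω] [StandardBorelSpace Ω]
    [m𝒳 : MeasurableSpace 𝒳]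
    (P : Measure Ω) [IsProbabilityMeasure P]
    (X : Ω → 𝒳) (hX : Measurable X)
    (O D : Ω → Bool) (hO : Measurable O) (hD : Measurable D)
    (Y1 Y0 : Ω → ℝ) (hY1m : Measurable Y1) (hY0m : Measurable Y0)
    (hY1 : Integrable Y1 P) (hY0 : Integrable Y0 P)
    -- unconfoundedness: (Y(1),Y(0)) ⊥ (O,D) | X
    (hunconf : CondIndepFun (MeasurableSpace.comap X m𝒳) hX.comap_le
      (fun ω => (Y1 ω, Y0 ω)) (fun ω => (O ω, D ω)) P)
    (π : Bool → 𝒳 → ℝ) (g : Bool → 𝒳 → ℝ) (μT μC ν : 𝒳 → ℝ)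
    -- π(o|X) = P(O = o | X)
    (hπ : ∀ o : Bool,
      P[(fun ω => if O ω = o then (1:ℝ) else 0) | MeasurableSpace.comap X m𝒳]
      =ᵐ[P] fun ω => π o (X ω))
    -- g(d|X) = P(D = d | X, O = 0): E[1[O=0]·1[D=d]|X] = g(d|X)·π(0|X)
    (hg : ∀ d : Bool,
      P[(fun ω => (if O ω then (0:ℝ) else 1) * (if D ω = d then (1:ℝ) else 0))
        | MeasurableSpace.comap X m𝒳]
      =ᵐ[P] fun ω => g d (X ω) * π false (X ω))
    -- μ_T(X) = E[Y(1)|X], μ_C(X) = E[Y(0)|X]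
    (hμT : P[Y1 | MeasurableSpace.comap X m𝒳] =ᵐ[P] fun ω => μT (X ω))
    (hμC : P[Y0 | MeasurableSpace.comap X m𝒳] =ᵐ[P] fun ω => μC (X ω))
    -- ν(X) = E[Ỹ | X, O = 0]: E[1[O=0]·Ỹ|X] = ν(X)·π(0|X)
    (hν : P[(fun ω => (if O ω then (0:ℝ) else 1) * (if D ω then Y1 ω else Y0 ω))
        | MeasurableSpace.comap X m𝒳]
      =ᵐ[P] fun ω => ν (X ω) * π false (X ω))
    -- common support
    (c : ℝ) (hc : 0 < c)
    (hπc : ∀ (o : Bool) (x : 𝒳), c < π o x)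
    (hgc : ∀ (d : Bool) (x : 𝒳), c < g d x)
    (hSint : Integrable (Scens X O (fun ω => if O ω then Y1 ω else (if D ω then Y1 ω else Y0 ω)) μT ν π g) P) :
    ∫ ω, (Scens X O (fun ω' => if O ω' then Y1 ω' else (if D ω' then Y1 ω' else Y0 ω')) μT ν π g ω
        - ∫ ω', (Y1 ω' - Y0 ω') ∂P) ∂P = 0 := by
  have hm := hX.comap_le
  -- measurability of indicator pieces
  have hITm : Measurable (fun ω => if O ω = true then (1:ℝ) else 0) :=
    Measurable.ite (hO (measurableSet_singleton true)) measurable_const measurable_const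
  have hICmeas : Measurable (fun ω => if O ω then (0:ℝ) else 1) :=
    Measurable.ite (hO (measurableSet_singleton true)) measurable_const measurable_const
  have hIDm : Measurable (fun ω => if D ω = true then (1:ℝ) else 0) :=
    Measurable.ite (hD (measurableSet_singleton true)) measurable_const measurable_const
  have hIDfm : Measurable (fun ω => if D ω = false then (1:ℝ) else 0) :=
    Measurable.ite (hD (measurableSet_singleton false)) measurable_const measurable_const
  have hYtm : Measurable (fun ω => if D ω then Y1 ω else Y0 ω) :=
    Measurable.ite (hD (measurableSet_singleton true)) hY1m hY0m
  -- pointwise positivity and bounds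
  have hp1pos : ∀ ω, 0 < π true (X ω) := fun ω => hc.trans (hπc true (X ω))
  have hp0pos : ∀ ω, 0 < π false (X ω) := fun ω => hc.trans (hπc false (X ω))
  have hg1pos : ∀ ω, 0 < g true (X ω) := fun ω => hc.trans (hgc true (X ω))
  have hg0pos : ∀ ω, 0 < g false (X ω) := fun ω => hc.trans (hgc false (X ω))
  have hcinv : (0:ℝ) ≤ c⁻¹ := inv_nonneg.2 hc.le
  have hip1 : ∀ ω, |(π true (X ω))⁻¹| ≤ c⁻¹ := fun ω => by
    rw [abs_of_pos (inv_pos.2 (hp1pos ω))]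
    exact inv_anti₀ hc (hπc true (X ω)).le
  have hip0 : ∀ ω, |(π false (X ω))⁻¹| ≤ c⁻¹ := fun ω => by
    rw [abs_of_pos (inv_pos.2 (hp0pos ω))]
    exact inv_anti₀ hc (hπc false (X ω)).le
  have hig0p0 : ∀ ω, |(g false (X ω) * π false (X ω))⁻¹| ≤ (c * c)⁻¹ := fun ω => by
    rw [abs_of_pos (inv_pos.2 (mul_pos (hg0pos ω) (hp0pos ω)))]
    exact inv_anti₀ (mul_pos hc hc)
      (mul_le_mul (hgc false (X ω)).le (hπc false (X ω)).le hc.le (hg0pos ω).le)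
  have hig0p1 : ∀ ω, |(g false (X ω) * π true (X ω))⁻¹| ≤ (c * c)⁻¹ := fun ω => by
    rw [abs_of_pos (inv_pos.2 (mul_pos (hg0pos ω) (hp1pos ω)))]
    exact inv_anti₀ (mul_pos hc hc)
      (mul_le_mul (hgc false (X ω)).le (hπc true (X ω)).le hc.le (hg0pos ω).le)
  have habsIT : ∀ ω, |(if O ω = true then (1:ℝ) else 0)| ≤ 1 := fun ω => by
    by_cases h' : O ω = true <;> simp [h']
  have habsIC : ∀ ω, |(if O ω then (0:ℝ) else 1)| ≤ 1 := fun ω => by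
    by_cases h' : O ω = true <;> simp [h']
  have habsYt : ∀ ω, |(if D ω then Y1 ω else Y0 ω)| ≤ |Y1 ω| + |Y0 ω| := fun ω => by
    by_cases h' : D ω = true <;> simp [h'] <;> positivity
  -- AEStronglyMeasurable' facts
  have hmt' : AEStronglyMeasurable[MeasurableSpace.comap X m𝒳] (fun ω => μT (X ω)) P :=
    ⟨_, stronglyMeasurable_condExp, hμT.symm⟩
  have hmc' : AEStronglyMeasurable[MeasurableSpace.comap X m𝒳] (fun ω => μC (X ω)) P :=
    ⟨_, stronglyMeasurable_condExp, hμC.symm⟩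
  have hp1' : AEStronglyMeasurable[MeasurableSpace.comap X m𝒳] (fun ω => π true (X ω)) P :=
    ⟨_, stronglyMeasurable_condExp, (hπ true).symm⟩
  have hp0' : AEStronglyMeasurable[MeasurableSpace.comap X m𝒳] (fun ω => π false (X ω)) P :=
    ⟨_, stronglyMeasurable_condExp, (hπ false).symm⟩
  have hnup0' : AEStronglyMeasurable[MeasurableSpace.comap X m𝒳]
      (fun ω => ν (X ω) * π false (X ω)) P := ⟨_, stronglyMeasurable_condExp, hν.symm⟩
  have hg1p0' : AEStronglyMeasurable[MeasurableSpace.comap X m𝒳]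
      (fun ω => g true (X ω) * π false (X ω)) P :=
    ⟨_, stronglyMeasurable_condExp, (hg true).symm⟩
  have hg0p0' : AEStronglyMeasurable[MeasurableSpace.comap X m𝒳]
      (fun ω => g false (X ω) * π false (X ω)) P :=
    ⟨_, stronglyMeasurable_condExp, (hg false).symm⟩
  have hg1' : AEStronglyMeasurable[MeasurableSpace.comap X m𝒳] (fun ω => g true (X ω)) P :=
    (aesm_mul hg1p0' (aesm_inv hp0')).congr (Filter.Eventually.of_forall fun ω =>
      mul_inv_cancel_right₀ (hp0pos ω).ne' _)
  have hg0' : AEStronglyMeasurable[MeasurableSpace.comap X m𝒳] (fun ω => g false (X ω)) P :=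
    (aesm_mul hg0p0' (aesm_inv hp0')).congr (Filter.Eventually.of_forall fun ω =>
      mul_inv_cancel_right₀ (hp0pos ω).ne' _)
  have hnu' : AEStronglyMeasurable[MeasurableSpace.comap X m𝒳] (fun ω => ν (X ω)) P :=
    (aesm_mul hnup0' (aesm_inv hp0')).congr (Filter.Eventually.of_forall fun ω =>
      mul_inv_cancel_right₀ (hp0pos ω).ne' _)
  -- conditional expectation of the O = false indicator
  have hICce : P[(fun ω => if O ω then (0:ℝ) else 1) | MeasurableSpace.comap X m𝒳]
      =ᵐ[P] fun ω => π false (X ω) := by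
    have hfe : (fun ω => if O ω = false then (1:ℝ) else 0)
        = fun ω => if O ω then (0:ℝ) else 1 := by
      funext ω; cases h : O ω <;> simp [h]
    have h := hπ false; rw [hfe] at h; exact h
  -- basic integrabilities
  have hmtI : Integrable (fun ω => μT (X ω)) P := integrable_condExp.congr hμT
  have hmcI : Integrable (fun ω => μC (X ω)) P := integrable_condExp.congr hμC
  have hnup0I : Integrable (fun ω => ν (X ω) * π false (X ω)) P := integrable_condExp.congr hν
  have hnuI : Integrable (fun ω => ν (X ω)) P := by
    refine Integrable.mono' (hnup0I.abs.const_mul c⁻¹) (aesm_top hm hnu')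
      (Filter.Eventually.of_forall fun ω => ?_)
    rw [Real.norm_eq_abs]
    calc |ν (X ω)| = c⁻¹ * (c * |ν (X ω)|) := by field_simp
      _ ≤ c⁻¹ * (|ν (X ω)| * π false (X ω)) := by
          refine mul_le_mul_of_nonneg_left ?_ hcinv
          calc c * |ν (X ω)| ≤ π false (X ω) * |ν (X ω)| :=
                mul_le_mul_of_nonneg_right (hπc false (X ω)).le (abs_nonneg _)
            _ = |ν (X ω)| * π false (X ω) := mul_comm _ _
      _ = c⁻¹ * |ν (X ω) * π false (X ω)| := by
          rw [abs_mul, abs_of_pos (hp0pos ω)]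
  have hITint : Integrable (fun ω => if O ω = true then (1:ℝ) else 0) P := by
    refine Integrable.mono' (integrable_const 1) hITm.aestronglyMeasurable
      (Filter.Eventually.of_forall fun ω => ?_)
    rw [Real.norm_eq_abs]; exact habsIT ω
  have hICint : Integrable (fun ω => if O ω then (0:ℝ) else 1) P := by
    refine Integrable.mono' (integrable_const 1) hICmeas.aestronglyMeasurable
      (Filter.Eventually.of_forall fun ω => ?_)
    rw [Real.norm_eq_abs]; exact habsIC ω
  have hITY1I : Integrable (fun ω => (if O ω = true then (1:ℝ) else 0) * Y1 ω) P := by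
    refine Integrable.mono' hY1.abs ((hITm.mul hY1m).aestronglyMeasurable)
      (Filter.Eventually.of_forall fun ω => ?_)
    rw [Real.norm_eq_abs, abs_mul]
    calc |(if O ω = true then (1:ℝ) else 0)| * |Y1 ω| ≤ 1 * |Y1 ω| :=
          mul_le_mul_of_nonneg_right (habsIT ω) (abs_nonneg _)
      _ = |Y1 ω| := one_mul _
  have hICYtI : Integrable
      (fun ω => (if O ω then (0:ℝ) else 1) * (if D ω then Y1 ω else Y0 ω)) P := by
    refine Integrable.mono' (hY1.abs.add hY0.abs) ((hICmeas.mul hYtm).aestronglyMeasurable)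
      (Filter.Eventually.of_forall fun ω => ?_)
    rw [Real.norm_eq_abs, abs_mul]
    calc |(if O ω then (0:ℝ) else 1)| * |(if D ω then Y1 ω else Y0 ω)|
        ≤ 1 * (|Y1 ω| + |Y0 ω|) :=
          mul_le_mul (habsIC ω) (habsYt ω) (abs_nonneg _) zero_le_one
      _ = |Y1 ω| + |Y0 ω| := one_mul _
  have hICIDY1I : Integrable
      (fun ω => (if O ω then (0:ℝ) else 1) * (if D ω = true then (1:ℝ) else 0) * Y1 ω) P := by
    refine Integrable.mono' hY1.abs (((hICmeas.mul hIDm).mul hY1m).aestronglyMeasurable)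
      (Filter.Eventually.of_forall fun ω => ?_)
    rw [Real.norm_eq_abs, abs_mul, abs_mul]
    have h1 : |(if O ω then (0:ℝ) else 1)| * |(if D ω = true then (1:ℝ) else 0)| ≤ 1 := by
      by_cases h' : O ω = true <;> by_cases h2 : D ω = true <;> simp [h', h2]
    calc |(if O ω then (0:ℝ) else 1)| * |(if D ω = true then (1:ℝ) else 0)| * |Y1 ω|
        ≤ 1 * |Y1 ω| := mul_le_mul_of_nonneg_right h1 (abs_nonneg _)
      _ = |Y1 ω| := one_mul _
  have hICIDY0I : Integrable
      (fun ω => (if O ω then (0:ℝ) else 1) * (if D ω = false then (1:ℝ) else 0) * Y0 ω) P := by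
    refine Integrable.mono' hY0.abs (((hICmeas.mul hIDfm).mul hY0m).aestronglyMeasurable)
      (Filter.Eventually.of_forall fun ω => ?_)
    rw [Real.norm_eq_abs, abs_mul, abs_mul]
    have h1 : |(if O ω then (0:ℝ) else 1)| * |(if D ω = false then (1:ℝ) else 0)| ≤ 1 := by
      by_cases h' : O ω = true <;> by_cases h2 : D ω = true <;> simp [h', h2]
    calc |(if O ω then (0:ℝ) else 1)| * |(if D ω = false then (1:ℝ) else 0)| * |Y0 ω|
        ≤ 1 * |Y0 ω| := mul_le_mul_of_nonneg_right h1 (abs_nonneg _)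
      _ = |Y0 ω| := one_mul _
  -- a.e. bound on g true
  have hg1le : ∀ᵐ ω ∂P, |g true (X ω)| ≤ c⁻¹ := by
    have hint1 : Integrable
        (fun ω => (if O ω then (0:ℝ) else 1) * (if D ω = true then (1:ℝ) else 0)) P := by
      refine Integrable.mono' (integrable_const 1) ((hICmeas.mul hIDm).aestronglyMeasurable)
        (Filter.Eventually.of_forall fun ω => ?_)
      rw [Real.norm_eq_abs, abs_mul]
      by_cases h' : O ω = true <;> by_cases h2 : D ω = true <;> simp [h', h2]
    have h1 := condExp_mono (m := MeasurableSpace.comap X m𝒳) (μ := P) hint1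
      (integrable_const (1:ℝ)) (Filter.Eventually.of_forall (fun ω => by
        by_cases h' : O ω = true <;> by_cases h2 : D ω = true <;> simp [h', h2]))
    rw [condExp_const hm] at h1
    filter_upwards [h1, hg true] with ω h1ω h2ω
    have h3 : g true (X ω) * π false (X ω) ≤ 1 := by rw [← h2ω]; exact h1ω
    have h4 : g true (X ω) * c ≤ 1 := by nlinarith [hπc false (X ω), hg1pos ω]
    rw [abs_of_pos (hg1pos ω)]
    calc g true (X ω) = g true (X ω) * c * c⁻¹ := by field_simp
      _ ≤ 1 * c⁻¹ := mul_le_mul_of_nonneg_right h4 hcinv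
      _ = c⁻¹ := one_mul _
  -- conditional-independence consequences
  have hfstY : (fun ω' => Prod.fst (Y1 ω', Y0 ω')) = Y1 := rfl
  have hsndY : (fun ω' => Prod.snd (Y1 ω', Y0 ω')) = Y0 := rfl
  have fact1 : P[(fun ω => (if O ω = true then (1:ℝ) else 0) * Y1 ω)
      | MeasurableSpace.comap X m𝒳] =ᵐ[P] fun ω => π true (X ω) * μT (X ω) := by
    have h := key_ci P X hX O D hO hD Y1 Y0 hY1m hY0m hunconf
      {p : Bool × Bool | p.1 = true} Prod.fst measurable_fst hY1
    have e1 : ((fun ω => (O ω, D ω)) ⁻¹' {p : Bool × Bool | p.1 = true}).indicator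
        (fun ω => Prod.fst (Y1 ω, Y0 ω))
        = fun ω => (if O ω = true then (1:ℝ) else 0) * Y1 ω := by
      funext ω; by_cases h' : O ω = true <;>
        simp [Set.indicator_apply, Set.mem_preimage, Set.mem_setOf_eq, h']
    have e2 : ((fun ω' => (O ω', D ω')) ⁻¹' {p : Bool × Bool | p.1 = true}).indicator
        (fun _ => (1:ℝ)) = fun ω => if O ω = true then (1:ℝ) else 0 := by
      funext ω; by_cases h' : O ω = true <;>
        simp [Set.indicator_apply, Set.mem_preimage, Set.mem_setOf_eq, h']
    rw [e1, e2, hfstY] at h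
    refine h.trans ?_
    filter_upwards [hπ true, hμT] with ω hω1 hω2
    rw [hω1, hω2]
  have factD : P[(fun ω => (if O ω then (0:ℝ) else 1) * (if D ω = true then (1:ℝ) else 0) * Y1 ω)
      | MeasurableSpace.comap X m𝒳]
      =ᵐ[P] fun ω => g true (X ω) * π false (X ω) * μT (X ω) := by
    have h := key_ci P X hX O D hO hD Y1 Y0 hY1m hY0m hunconf
      {p : Bool × Bool | p.1 = false ∧ p.2 = true} Prod.fst measurable_fst hY1
    have e1 : ((fun ω => (O ω, D ω)) ⁻¹' {p : Bool × Bool | p.1 = false ∧ p.2 = true}).indicator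
        (fun ω => Prod.fst (Y1 ω, Y0 ω))
        = fun ω => (if O ω then (0:ℝ) else 1) * (if D ω = true then (1:ℝ) else 0) * Y1 ω := by
      funext ω; by_cases h' : O ω = true <;> by_cases h2 : D ω = true <;>
        simp [Set.indicator_apply, Set.mem_preimage, Set.mem_setOf_eq, h', h2]
    have e2 : ((fun ω' => (O ω', D ω')) ⁻¹' {p : Bool × Bool | p.1 = false ∧ p.2 = true}).indicator
        (fun _ => (1:ℝ))
        = fun ω => (if O ω then (0:ℝ) else 1) * (if D ω = true then (1:ℝ) else 0) := by
      funext ω; by_cases h' : O ω = true <;> by_cases h2 : D ω = true <;>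
        simp [Set.indicator_apply, Set.mem_preimage, Set.mem_setOf_eq, h', h2]
    rw [e1, e2, hfstY] at h
    refine h.trans ?_
    filter_upwards [hg true, hμT] with ω hω1 hω2
    rw [hω1, hω2]
  have factN : P[(fun ω => (if O ω then (0:ℝ) else 1) * (if D ω = false then (1:ℝ) else 0) * Y0 ω)
      | MeasurableSpace.comap X m𝒳]
      =ᵐ[P] fun ω => g false (X ω) * π false (X ω) * μC (X ω) := by
    have h := key_ci P X hX O D hO hD Y1 Y0 hY1m hY0m hunconf
      {p : Bool × Bool | p.1 = false ∧ p.2 = false} Prod.snd measurable_snd hY0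
    have e1 : ((fun ω => (O ω, D ω)) ⁻¹' {p : Bool × Bool | p.1 = false ∧ p.2 = false}).indicator
        (fun ω => Prod.snd (Y1 ω, Y0 ω))
        = fun ω => (if O ω then (0:ℝ) else 1) * (if D ω = false then (1:ℝ) else 0) * Y0 ω := by
      funext ω; by_cases h' : O ω = true <;> by_cases h2 : D ω = true <;>
        simp [Set.indicator_apply, Set.mem_preimage, Set.mem_setOf_eq, h', h2]
    have e2 : ((fun ω' => (O ω', D ω')) ⁻¹' {p : Bool × Bool | p.1 = false ∧ p.2 = false}).indicator
        (fun _ => (1:ℝ))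
        = fun ω => (if O ω then (0:ℝ) else 1) * (if D ω = false then (1:ℝ) else 0) := by
      funext ω; by_cases h' : O ω = true <;> by_cases h2 : D ω = true <;>
        simp [Set.indicator_apply, Set.mem_preimage, Set.mem_setOf_eq, h', h2]
    rw [e1, e2, hsndY] at h
    refine h.trans ?_
    filter_upwards [hg false, hμC] with ω hω1 hω2
    rw [hω1, hω2]
  -- ν decomposition
  have hkey : (fun ω => ν (X ω) * π false (X ω)) =ᵐ[P]
      fun ω => g true (X ω) * π false (X ω) * μT (X ω)
        + g false (X ω) * π false (X ω) * μC (X ω) := by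
    have hfe : (fun ω => (if O ω then (0:ℝ) else 1) * (if D ω then Y1 ω else Y0 ω))
        = fun ω => ((if O ω then (0:ℝ) else 1) * (if D ω = true then (1:ℝ) else 0) * Y1 ω)
          + ((if O ω then (0:ℝ) else 1) * (if D ω = false then (1:ℝ) else 0) * Y0 ω) := by
      funext ω; by_cases h' : O ω = true <;> by_cases h2 : D ω = true <;> simp [h', h2]
    have h := hν.symm
    rw [hfe] at h
    have hadd := condExp_add (μ := P) (m := MeasurableSpace.comap X m𝒳) hICIDY1I hICIDY0I
    refine h.trans ((hadd.trans ?_))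
    filter_upwards [factD, factN] with ω h1 h2
    simp only [Pi.add_apply]
    rw [h1, h2]
  -- integrability of the seven integrand pieces
  have hA1I : Integrable (fun ω => (π true (X ω))⁻¹
      * ((if O ω = true then (1:ℝ) else 0) * Y1 ω)) P := by
    refine Integrable.mono' (hY1.abs.const_mul c⁻¹)
      ((aesm_top hm (aesm_inv hp1')).mul ((hITm.mul hY1m).aestronglyMeasurable))
      (Filter.Eventually.of_forall fun ω => ?_)
    rw [Real.norm_eq_abs, abs_mul, abs_mul]
    calc |(π true (X ω))⁻¹| * (|(if O ω = true then (1:ℝ) else 0)| * |Y1 ω|)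
        ≤ c⁻¹ * (1 * |Y1 ω|) := by
          refine mul_le_mul (hip1 ω) ?_ (by positivity) hcinv
          exact mul_le_mul_of_nonneg_right (habsIT ω) (abs_nonneg _)
      _ = c⁻¹ * |Y1 ω| := by ring
  have hB1I : Integrable (fun ω => ((π true (X ω))⁻¹ * μT (X ω))
      * (if O ω = true then (1:ℝ) else 0)) P := by
    refine Integrable.mono' (hmtI.abs.const_mul c⁻¹)
      ((aesm_top hm (aesm_mul (aesm_inv hp1') hmt')).mul hITm.aestronglyMeasurable)
      (Filter.Eventually.of_forall fun ω => ?_)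
    rw [Real.norm_eq_abs, abs_mul, abs_mul]
    calc |(π true (X ω))⁻¹| * |μT (X ω)| * |(if O ω = true then (1:ℝ) else 0)|
        ≤ c⁻¹ * |μT (X ω)| * 1 := by
          refine mul_le_mul ?_ (habsIT ω) (abs_nonneg _) (by positivity)
          exact mul_le_mul_of_nonneg_right (hip1 ω) (abs_nonneg _)
      _ = c⁻¹ * |μT (X ω)| := mul_one _
  have hA2aI : Integrable (fun ω => (g false (X ω) * π false (X ω))⁻¹
      * ((if O ω then (0:ℝ) else 1) * (if D ω then Y1 ω else Y0 ω))) P := by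
    refine Integrable.mono' ((hY1.abs.add hY0.abs).const_mul (c * c)⁻¹)
      ((aesm_top hm (aesm_inv hg0p0')).mul ((hICmeas.mul hYtm).aestronglyMeasurable))
      (Filter.Eventually.of_forall fun ω => ?_)
    rw [Real.norm_eq_abs, abs_mul, abs_mul]
    calc |(g false (X ω) * π false (X ω))⁻¹|
          * (|(if O ω then (0:ℝ) else 1)| * |(if D ω then Y1 ω else Y0 ω)|)
        ≤ (c * c)⁻¹ * (1 * (|Y1 ω| + |Y0 ω|)) := by
          refine mul_le_mul (hig0p0 ω) ?_ (by positivity) (by positivity)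
          exact mul_le_mul (habsIC ω) (habsYt ω) (abs_nonneg _) zero_le_one
      _ = (c * c)⁻¹ * (|Y1 ω| + |Y0 ω|) := by ring
  have hA2bI : Integrable (fun ω => ((g false (X ω) * π false (X ω))⁻¹ * ν (X ω))
      * (if O ω then (0:ℝ) else 1)) P := by
    refine Integrable.mono' (hnuI.abs.const_mul (c * c)⁻¹)
      ((aesm_top hm (aesm_mul (aesm_inv hg0p0') hnu')).mul hICmeas.aestronglyMeasurable)
      (Filter.Eventually.of_forall fun ω => ?_)
    rw [Real.norm_eq_abs, abs_mul, abs_mul]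
    calc |(g false (X ω) * π false (X ω))⁻¹| * |ν (X ω)| * |(if O ω then (0:ℝ) else 1)|
        ≤ (c * c)⁻¹ * |ν (X ω)| * 1 := by
          refine mul_le_mul ?_ (habsIC ω) (abs_nonneg _) (by positivity)
          exact mul_le_mul_of_nonneg_right (hig0p0 ω) (abs_nonneg _)
      _ = (c * c)⁻¹ * |ν (X ω)| := mul_one _
  have hA3I : Integrable (fun ω => (g true (X ω) * (g false (X ω) * π true (X ω))⁻¹)
      * ((if O ω = true then (1:ℝ) else 0) * Y1 ω)) P := by
    refine Integrable.mono' (hY1.abs.const_mul (c⁻¹ * (c * c)⁻¹))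
      ((aesm_top hm (aesm_mul hg1' (aesm_inv (aesm_mul hg0' hp1')))).mul
        ((hITm.mul hY1m).aestronglyMeasurable)) ?_
    filter_upwards [hg1le] with ω hω
    rw [Real.norm_eq_abs, abs_mul, abs_mul, abs_mul]
    calc |g true (X ω)| * |(g false (X ω) * π true (X ω))⁻¹|
          * (|(if O ω = true then (1:ℝ) else 0)| * |Y1 ω|)
        ≤ c⁻¹ * (c * c)⁻¹ * (1 * |Y1 ω|) := by
          refine mul_le_mul ?_ ?_ (by positivity) (by positivity)
          · exact mul_le_mul hω (hig0p1 ω) (abs_nonneg _) hcinv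
          · exact mul_le_mul_of_nonneg_right (habsIT ω) (abs_nonneg _)
      _ = c⁻¹ * (c * c)⁻¹ * |Y1 ω| := by ring
  have hB3I : Integrable (fun ω => ((g true (X ω) * (g false (X ω) * π true (X ω))⁻¹)
      * μT (X ω)) * (if O ω = true then (1:ℝ) else 0)) P := by
    refine Integrable.mono' (hmtI.abs.const_mul (c⁻¹ * (c * c)⁻¹))
      ((aesm_top hm (aesm_mul (aesm_mul hg1' (aesm_inv (aesm_mul hg0' hp1'))) hmt')).mul
        hITm.aestronglyMeasurable) ?_
    filter_upwards [hg1le] with ω hω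
    rw [Real.norm_eq_abs, abs_mul, abs_mul, abs_mul]
    calc |g true (X ω)| * |(g false (X ω) * π true (X ω))⁻¹| * |μT (X ω)|
          * |(if O ω = true then (1:ℝ) else 0)|
        ≤ c⁻¹ * (c * c)⁻¹ * |μT (X ω)| * 1 := by
          refine mul_le_mul ?_ (habsIT ω) (abs_nonneg _) (by positivity)
          refine mul_le_mul_of_nonneg_right ?_ (abs_nonneg _)
          exact mul_le_mul hω (hig0p1 ω) (abs_nonneg _) hcinv
      _ = c⁻¹ * (c * c)⁻¹ * |μT (X ω)| := mul_one _
  have hRI : Integrable (fun ω => μT (X ω) - ν (X ω) / g false (X ω)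
      + g true (X ω) * μT (X ω) / g false (X ω)) P := by
    have h1 : Integrable (fun ω => ν (X ω) / g false (X ω)) P := by
      refine Integrable.mono' (hnuI.abs.const_mul c⁻¹)
        (aesm_top hm ((aesm_mul hnu' (aesm_inv hg0')).congr
          (Filter.Eventually.of_forall fun ω => (div_eq_mul_inv _ _).symm)))
        (Filter.Eventually.of_forall fun ω => ?_)
      rw [Real.norm_eq_abs, abs_div, abs_of_pos (hg0pos ω)]
      rw [div_le_iff₀ (hg0pos ω)]
      have hx : c⁻¹ * c * |ν (X ω)| = |ν (X ω)| := by
        rw [inv_mul_cancel₀ hc.ne', one_mul]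
      nlinarith [mul_nonneg (mul_nonneg hcinv (abs_nonneg (ν (X ω))))
        (sub_nonneg.2 (hgc false (X ω)).le), hx]
    have h2 : Integrable (fun ω => g true (X ω) * μT (X ω) / g false (X ω)) P := by
      refine Integrable.mono' (hmtI.abs.const_mul (c⁻¹ * c⁻¹))
        (aesm_top hm ((aesm_mul (aesm_mul hg1' hmt') (aesm_inv hg0')).congr
          (Filter.Eventually.of_forall fun ω => (div_eq_mul_inv _ _).symm))) ?_
      filter_upwards [hg1le] with ω hω
      rw [Real.norm_eq_abs, abs_div, abs_of_pos (hg0pos ω), abs_mul]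
      rw [div_le_iff₀ (hg0pos ω)]
      have hg0i : (1:ℝ) ≤ c⁻¹ * g false (X ω) := by
        rw [← inv_mul_cancel₀ hc.ne']
        exact mul_le_mul_of_nonneg_left (hgc false (X ω)).le hcinv
      calc |g true (X ω)| * |μT (X ω)| ≤ c⁻¹ * |μT (X ω)| :=
            mul_le_mul_of_nonneg_right hω (abs_nonneg _)
        _ = c⁻¹ * |μT (X ω)| * 1 := (mul_one _).symm
        _ ≤ c⁻¹ * |μT (X ω)| * (c⁻¹ * g false (X ω)) := by
            refine mul_le_mul_of_nonneg_left hg0i (by positivity)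
        _ = c⁻¹ * c⁻¹ * |μT (X ω)| * g false (X ω) := by ring
    exact (hmtI.sub h1).add h2
  -- the three vanishing integrals
  have hIT_P : ∫ ω, ((π true (X ω))⁻¹ * μT (X ω)) * (if O ω = true then (1:ℝ) else 0) ∂P
      = ∫ ω, ((π true (X ω))⁻¹ * μT (X ω)) * π true (X ω) ∂P := by
    rw [integral_mul_condexp hm P (aesm_mul (aesm_inv hp1') hmt') hITint hB1I]
    exact integral_congr_ae ((hπ true).mono fun ω hω => by simp only [hω])
  have hA1_P : ∫ ω, (π true (X ω))⁻¹ * ((if O ω = true then (1:ℝ) else 0) * Y1 ω) ∂P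
      = ∫ ω, (π true (X ω))⁻¹ * (π true (X ω) * μT (X ω)) ∂P := by
    rw [integral_mul_condexp hm P (aesm_inv hp1') hITY1I hA1I]
    exact integral_congr_ae (fact1.mono fun ω hω => by simp only [hω])
  have hI1 : ∫ ω, (π true (X ω))⁻¹ * ((if O ω = true then (1:ℝ) else 0) * Y1 ω) ∂P
      = ∫ ω, ((π true (X ω))⁻¹ * μT (X ω)) * (if O ω = true then (1:ℝ) else 0) ∂P := by
    rw [hA1_P, hIT_P]
    exact integral_congr_ae (Filter.Eventually.of_forall fun ω => by ring)
  have hA2a_P : ∫ ω, (g false (X ω) * π false (X ω))⁻¹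
      * ((if O ω then (0:ℝ) else 1) * (if D ω then Y1 ω else Y0 ω)) ∂P
      = ∫ ω, (g false (X ω) * π false (X ω))⁻¹ * (ν (X ω) * π false (X ω)) ∂P := by
    rw [integral_mul_condexp hm P (aesm_inv hg0p0') hICYtI hA2aI]
    exact integral_congr_ae (hν.mono fun ω hω => by simp only [hω])
  have hA2b_P : ∫ ω, ((g false (X ω) * π false (X ω))⁻¹ * ν (X ω))
      * (if O ω then (0:ℝ) else 1) ∂P
      = ∫ ω, ((g false (X ω) * π false (X ω))⁻¹ * ν (X ω)) * π false (X ω) ∂P := by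
    rw [integral_mul_condexp hm P (aesm_mul (aesm_inv hg0p0') hnu') hICint hA2bI]
    exact integral_congr_ae (hICce.mono fun ω hω => by simp only [hω])
  have hI2 : ∫ ω, (g false (X ω) * π false (X ω))⁻¹
      * ((if O ω then (0:ℝ) else 1) * (if D ω then Y1 ω else Y0 ω)) ∂P
      = ∫ ω, ((g false (X ω) * π false (X ω))⁻¹ * ν (X ω))
      * (if O ω then (0:ℝ) else 1) ∂P := by
    rw [hA2a_P, hA2b_P]
    exact integral_congr_ae (Filter.Eventually.of_forall fun ω => by ring)
  have hA3_P : ∫ ω, (g true (X ω) * (g false (X ω) * π true (X ω))⁻¹)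
      * ((if O ω = true then (1:ℝ) else 0) * Y1 ω) ∂P
      = ∫ ω, (g true (X ω) * (g false (X ω) * π true (X ω))⁻¹)
      * (π true (X ω) * μT (X ω)) ∂P := by
    rw [integral_mul_condexp hm P (aesm_mul hg1' (aesm_inv (aesm_mul hg0' hp1')))
      hITY1I hA3I]
    exact integral_congr_ae (fact1.mono fun ω hω => by simp only [hω])
  have hB3_P : ∫ ω, ((g true (X ω) * (g false (X ω) * π true (X ω))⁻¹) * μT (X ω))
      * (if O ω = true then (1:ℝ) else 0) ∂P
      = ∫ ω, ((g true (X ω) * (g false (X ω) * π true (X ω))⁻¹) * μT (X ω))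
      * π true (X ω) ∂P := by
    rw [integral_mul_condexp hm P
      (aesm_mul (aesm_mul hg1' (aesm_inv (aesm_mul hg0' hp1'))) hmt') hITint hB3I]
    exact integral_congr_ae ((hπ true).mono fun ω hω => by simp only [hω])
  have hI3 : ∫ ω, (g true (X ω) * (g false (X ω) * π true (X ω))⁻¹)
      * ((if O ω = true then (1:ℝ) else 0) * Y1 ω) ∂P
      = ∫ ω, ((g true (X ω) * (g false (X ω) * π true (X ω))⁻¹) * μT (X ω))
      * (if O ω = true then (1:ℝ) else 0) ∂P := by
    rw [hA3_P, hB3_P]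
    exact integral_congr_ae (Filter.Eventually.of_forall fun ω => by ring)
  -- the R piece
  have hR2 : (fun ω => μT (X ω) - ν (X ω) / g false (X ω)
      + g true (X ω) * μT (X ω) / g false (X ω)) =ᵐ[P]
      fun ω => μT (X ω) - μC (X ω) := by
    filter_upwards [hkey] with ω h
    have hp0 : π false (X ω) ≠ 0 := (hp0pos ω).ne'
    have hg0 : g false (X ω) ≠ 0 := (hg0pos ω).ne'
    have hnu_eq : ν (X ω) = g true (X ω) * μT (X ω) + g false (X ω) * μC (X ω) := by
      have h2 : ν (X ω) * π false (X ω)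
          = (g true (X ω) * μT (X ω) + g false (X ω) * μC (X ω)) * π false (X ω) := by
        rw [h]; ring
      exact mul_right_cancel₀ hp0 h2
    rw [hnu_eq]
    field_simp
    ring
  have hIR : ∫ ω, (μT (X ω) - ν (X ω) / g false (X ω)
      + g true (X ω) * μT (X ω) / g false (X ω)) ∂P
      = (∫ ω, Y1 ω ∂P) - ∫ ω, Y0 ω ∂P := by
    have hmtInt : ∫ ω, μT (X ω) ∂P = ∫ ω, Y1 ω ∂P := by
      rw [← integral_condExp (μ := P) (f := Y1) hm]
      exact integral_congr_ae hμT.symm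
    have hmcInt : ∫ ω, μC (X ω) ∂P = ∫ ω, Y0 ω ∂P := by
      rw [← integral_condExp (μ := P) (f := Y0) hm]
      exact integral_congr_ae hμC.symm
    rw [integral_congr_ae hR2, integral_sub hmtI hmcI, hmtInt, hmcInt]
  -- decompose Scens pointwise
  have hsplit : (fun ω => Scens X O
        (fun ω' => if O ω' then Y1 ω' else (if D ω' then Y1 ω' else Y0 ω')) μT ν π g ω)
      = fun ω =>
        ((π true (X ω))⁻¹ * ((if O ω = true then (1:ℝ) else 0) * Y1 ω)
          - ((π true (X ω))⁻¹ * μT (X ω)) * (if O ω = true then (1:ℝ) else 0))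
        + ((((g false (X ω) * π false (X ω))⁻¹ * ν (X ω)) * (if O ω then (0:ℝ) else 1)
            - (g false (X ω) * π false (X ω))⁻¹
              * ((if O ω then (0:ℝ) else 1) * (if D ω then Y1 ω else Y0 ω)))
          + (((g true (X ω) * (g false (X ω) * π true (X ω))⁻¹)
                * ((if O ω = true then (1:ℝ) else 0) * Y1 ω)
              - ((g true (X ω) * (g false (X ω) * π true (X ω))⁻¹) * μT (X ω))
                * (if O ω = true then (1:ℝ) else 0))
            + (μT (X ω) - ν (X ω) / g false (X ω)
              + g true (X ω) * μT (X ω) / g false (X ω)))) := by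
    funext ω
    by_cases h' : O ω = true <;> simp only [Scens, h', if_true, if_false, Bool.false_eq_true] <;>
      field_simp <;> ring
  -- total integral of Scens
  have hStot : ∫ ω, Scens X O
      (fun ω' => if O ω' then Y1 ω' else (if D ω' then Y1 ω' else Y0 ω')) μT ν π g ω ∂P
      = (∫ ω, Y1 ω ∂P) - ∫ ω, Y0 ω ∂P := by
    have s1 : ∫ ω, (((π true (X ω))⁻¹ * ((if O ω = true then (1:ℝ) else 0) * Y1 ω) - ((π true (X ω))⁻¹ * μT (X ω)) * (if O ω = true then (1:ℝ) else 0)) + ((((g false (X ω) * π false (X ω))⁻¹ * ν (X ω)) * (if O ω then (0:ℝ) else 1) - (g false (X ω) * π false (X ω))⁻¹ * ((if O ω then (0:ℝ) else 1) * (if D ω then Y1 ω else Y0 ω))) + (((g true (X ω) * (g false (X ω) * π true (X ω))⁻¹) * ((if O ω = true then (1:ℝ) else 0) * Y1 ω) - ((g true (X ω) * (g false (X ω) * π true (X ω))⁻¹) * μT (X ω)) * (if O ω = true then (1:ℝ) else 0)) + (μT (X ω) - ν (X ω) / g false (X ω) + g true (X ω) * μT (X ω) / g false (X ω))))) ∂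P
        = (∫ ω, ((π true (X ω))⁻¹ * ((if O ω = true then (1:ℝ) else 0) * Y1 ω) - ((π true (X ω))⁻¹ * μT (X ω)) * (if O ω = true then (1:ℝ) else 0)) ∂P) + ∫ ω, ((((g false (X ω) * π false (X ω))⁻¹ * ν (X ω)) * (if O ω then (0:ℝ) else 1) - (g false (X ω) * π false (X ω))⁻¹ * ((if O ω then (0:ℝ) else 1) * (if D ω then Y1 ω else Y0 ω))) + (((g true (X ω) * (g false (X ω) * π true (X ω))⁻¹) * ((if O ω = true then (1:ℝ) else 0) * Y1 ω) - ((g true (X ω) * (g false (X ω) * π true (X ω))⁻¹) * μT (X ω)) * (if O ω = true then (1:ℝ) else 0)) + (μT (X ω) - ν (X ω) / g false (X ω) + g true (X ω) * μT (X ω) / g false (X ω)))) ∂P :=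
      integral_add (hA1I.sub hB1I) ((hA2bI.sub hA2aI).add ((hA3I.sub hB3I).add hRI))
    have s2 : ∫ ω, ((((g false (X ω) * π false (X ω))⁻¹ * ν (X ω)) * (if O ω then (0:ℝ) else 1) - (g false (X ω) * π false (X ω))⁻¹ * ((if O ω then (0:ℝ) else 1) * (if D ω then Y1 ω else Y0 ω))) + (((g true (X ω) * (g false (X ω) * π true (X ω))⁻¹) * ((if O ω = true then (1:ℝ) else 0) * Y1 ω) - ((g true (X ω) * (g false (X ω) * π true (X ω))⁻¹) * μT (X ω)) * (if O ω = true then (1:ℝ) else 0)) + (μT (X ω) - ν (X ω) / g false (X ω) + g true (X ω) * μT (X ω) / g false (X ω)))) ∂P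
        = (∫ ω, (((g false (X ω) * π false (X ω))⁻¹ * ν (X ω)) * (if O ω then (0:ℝ) else 1) - (g false (X ω) * π false (X ω))⁻¹ * ((if O ω then (0:ℝ) else 1) * (if D ω then Y1 ω else Y0 ω))) ∂P) + ∫ ω, (((g true (X ω) * (g false (X ω) * π true (X ω))⁻¹) * ((if O ω = true then (1:ℝ) else 0) * Y1 ω) - ((g true (X ω) * (g false (X ω) * π true (X ω))⁻¹) * μT (X ω)) * (if O ω = true then (1:ℝ) else 0)) + (μT (X ω) - ν (X ω) / g false (X ω) + g true (X ω) * μT (X ω) / g false (X ω))) ∂P :=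
      integral_add (hA2bI.sub hA2aI) ((hA3I.sub hB3I).add hRI)
    have s3 : ∫ ω, (((g true (X ω) * (g false (X ω) * π true (X ω))⁻¹) * ((if O ω = true then (1:ℝ) else 0) * Y1 ω) - ((g true (X ω) * (g false (X ω) * π true (X ω))⁻¹) * μT (X ω)) * (if O ω = true then (1:ℝ) else 0)) + (μT (X ω) - ν (X ω) / g false (X ω) + g true (X ω) * μT (X ω) / g false (X ω))) ∂P = (∫ ω, ((g true (X ω) * (g false (X ω) * π true (X ω))⁻¹) * ((if O ω = true then (1:ℝ) else 0) * Y1 ω) - ((g true (X ω) * (g false (X ω) * π true (X ω))⁻¹) * μT (X ω)) * (if O ω = true then (1:ℝ) else 0)) ∂P) + ∫ ω, (μT (X ω) - ν (X ω) / g false (X ω) + g true (X ω) * μT (X ω) / g false (X ω)) ∂P :=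
      integral_add (hA3I.sub hB3I) hRI
    have s4 : ∫ ω, ((π true (X ω))⁻¹ * ((if O ω = true then (1:ℝ) else 0) * Y1 ω) - ((π true (X ω))⁻¹ * μT (X ω)) * (if O ω = true then (1:ℝ) else 0)) ∂P = (∫ ω, (π true (X ω))⁻¹ * ((if O ω = true then (1:ℝ) else 0) * Y1 ω) ∂P) - ∫ ω, ((π true (X ω))⁻¹ * μT (X ω)) * (if O ω = true then (1:ℝ) else 0) ∂P := integral_sub hA1I hB1I
    have s5 : ∫ ω, (((g false (X ω) * π false (X ω))⁻¹ * ν (X ω)) * (if O ω then (0:ℝ) else 1) - (g false (X ω) * π false (X ω))⁻¹ * ((if O ω then (0:ℝ) else 1) * (if D ω then Y1 ω else Y0 ω))) ∂P = (∫ ω, ((g false (X ω) * π false (X ω))⁻¹ * ν (X ω)) * (if O ω then (0:ℝ) else 1) ∂P) - ∫ ω, (g false (X ω) * π false (X ω))⁻¹ * ((if O ω then (0:ℝ) else 1) * (if D ω then Y1 ω else Y0 ω)) ∂P := integral_sub hA2bI hA2aI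
    have s6 : ∫ ω, ((g true (X ω) * (g false (X ω) * π true (X ω))⁻¹) * ((if O ω = true then (1:ℝ) else 0) * Y1 ω) - ((g true (X ω) * (g false (X ω) * π true (X ω))⁻¹) * μT (X ω)) * (if O ω = true then (1:ℝ) else 0)) ∂P = (∫ ω, (g true (X ω) * (g false (X ω) * π true (X ω))⁻¹) * ((if O ω = true then (1:ℝ) else 0) * Y1 ω) ∂P) - ∫ ω, ((g true (X ω) * (g false (X ω) * π true (X ω))⁻¹) * μT (X ω)) * (if O ω = true then (1:ℝ) else 0) ∂P := integral_sub hA3I hB3I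
    rw [hsplit, s1, s2, s3, s4, s5, s6, hIR, hI1, hI2, hI3]
    ring
  -- conclude
  rw [integral_sub hSint (integrable_const _), integral_const, probReal_univ, one_smul, integral_sub hY1 hY0, hStot, sub_self]
end

section
/- Identification of the control mean in the case-control setting: E[Y(0)] = E[ (Y_U − e(1|X)·μ_T(X)) / e(0|X) ] = E[ Y_U/e(0|X) ] − E[ e(1|X)·μ_T(X)/e(0|X) ], where expectations are under the unlabeled distribution. -/
open MeasureTheory ProbabilityTheory Filter Topology
open scoped ENNReal

lemma condexp_indicator_mul_of_forall
    {Ω β : Type*} {m : MeasurableSpace Ω} [mΩ : MeasurableSpace Ω]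
    [mβ : MeasurableSpace β] (hm : m ≤ mΩ)
    (μ : Measure Ω) [IsProbabilityMeasure μ]
    {f : Ω → β} (hf : Measurable f) {t : Set Ω} (ht : MeasurableSet t)
    (hindep : ∀ s : Set β, MeasurableSet s →
      (μ⟦f ⁻¹' s ∩ t | m⟧) =ᵐ[μ] fun ω => (μ⟦f ⁻¹' s | m⟧) ω * (μ⟦t | m⟧) ω)
    {Z : Ω → ℝ} (hZint : Integrable Z μ) (hZm : StronglyMeasurable[mβ.comap f] Z) :
    μ[t.indicator Z | m] =ᵐ[μ] fun ω => (μ[Z | m]) ω * (μ⟦t | m⟧) ω := by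
  have hmf : mβ.comap f ≤ mΩ := hf.comap_le
  set ν := μ.trim hmf with hν
  set q : Ω → ℝ := μ⟦t | m⟧ with hq
  have hq_bdd : ∀ᵐ ω ∂μ, ‖q ω‖ ≤ 1 := by
    have h0 : (0 : Ω → ℝ) ≤ᵐ[μ] q :=
      condExp_nonneg (Filter.Eventually.of_forall fun ω =>
        Set.indicator_nonneg (fun _ _ => zero_le_one) ω)
    have h1 : q ≤ᵐ[μ] fun _ => (1 : ℝ) := by
      have h := condExp_mono (μ := μ) (m := m)
        (f := t.indicator fun _ => (1:ℝ)) (g := fun _ => (1:ℝ))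
        ((integrable_const (1:ℝ)).indicator ht) (integrable_const (1:ℝ))
        (Filter.Eventually.of_forall fun ω =>
          Set.indicator_le_self' (fun _ _ => zero_le_one) ω)
      have hcc : μ[(fun _ : Ω => (1:ℝ))|m] = fun _ => (1:ℝ) := condExp_const (μ := μ) hm (1:ℝ)
      rw [hcc] at h
      exact h
    filter_upwards [h0, h1] with ω hω0 hω1
    have hω0' : (0:ℝ) ≤ q ω := hω0
    rw [Real.norm_eq_abs, abs_le]
    exact ⟨by linarith, hω1⟩
  set Pr : (Ω → ℝ) → Prop := fun Z =>
    μ[t.indicator Z | m] =ᵐ[μ] fun ω => (μ[Z | m]) ω * q ω with hPr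
  suffices h : ∀ ⦃Z : Ω → ℝ⦄, Integrable Z ν → Pr Z from h (hZint.trim hmf hZm)
  refine @Integrable.induction Ω ℝ (mβ.comap f) _ ν Pr ?_ ?_ ?_ ?_
  · -- indicator case
    rintro c s ⟨s', hs', rfl⟩ -
    have e1 : t.indicator ((f ⁻¹' s').indicator fun _ => c)
        = c • (f ⁻¹' s' ∩ t).indicator (fun _ => (1:ℝ)) := by
      funext ω
      by_cases h1 : ω ∈ t <;> by_cases h2 : ω ∈ f ⁻¹' s' <;>
        simp [Set.indicator_apply, h1, h2, Set.mem_inter_iff]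
    have e2 : (f ⁻¹' s').indicator (fun _ => c)
        = c • (f ⁻¹' s').indicator (fun _ => (1:ℝ)) := by
      funext ω
      by_cases h2 : ω ∈ f ⁻¹' s' <;> simp [Set.indicator_apply, h2]
    show μ[t.indicator ((f ⁻¹' s').indicator fun _ => c) | m] =ᵐ[μ] _
    rw [e1]
    calc μ[c • (f ⁻¹' s' ∩ t).indicator (fun _ => (1:ℝ)) | m]
        =ᵐ[μ] c • μ⟦f ⁻¹' s' ∩ t | m⟧ := condExp_smul c _ _
      _ =ᵐ[μ] fun ω => c • ((μ⟦f ⁻¹' s' | m⟧) ω * q ω) := by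
          filter_upwards [hindep s' hs'] with ω hω
          simp only [Pi.smul_apply, hω]
      _ =ᵐ[μ] fun ω => (μ[(f ⁻¹' s').indicator (fun _ => c) | m]) ω * q ω := by
          have h3 : μ[(f ⁻¹' s').indicator (fun _ => c) | m]
              =ᵐ[μ] c • μ⟦f ⁻¹' s' | m⟧ := by
            rw [e2]; exact condExp_smul c _ _
          filter_upwards [h3] with ω hω
          rw [hω]
          simp [smul_eq_mul]; ring
  · -- additivity
    intro Z W _ hZν hWν hPZ hPW
    have hZμ : Integrable Z μ := integrable_of_integrable_trim hmf hZν
    have hWμ : Integrable W μ := integrable_of_integrable_trim hmf hWν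
    have e1 : t.indicator (Z + W) = t.indicator Z + t.indicator W := by
      funext ω; by_cases h1 : ω ∈ t <;> simp [Set.indicator_apply, h1]
    show μ[t.indicator (Z + W) | m] =ᵐ[μ] _
    rw [e1]
    calc μ[t.indicator Z + t.indicator W | m]
        =ᵐ[μ] μ[t.indicator Z | m] + μ[t.indicator W | m] :=
          condExp_add (hZμ.indicator ht) (hWμ.indicator ht) m
      _ =ᵐ[μ] fun ω => (μ[Z|m]) ω * q ω + (μ[W|m]) ω * q ω := by
          filter_upwards [hPZ, hPW] with ω h1 h2
          simp only [Pi.add_apply, h1, h2]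
      _ =ᵐ[μ] fun ω => (μ[Z + W|m]) ω * q ω := by
          filter_upwards [condExp_add hZμ hWμ m] with ω hω
          rw [hω]; simp [add_mul]
  · -- closedness in L¹(ν)
    haveI : SequentialSpace ↥(Lp ℝ 1 ν) := by
      set_option synthInstance.maxHeartbeats 1000000 in infer_instance
    refine IsSeqClosed.isClosed ?_
    intro Zs Zl hmem hlim
    have hZlμ : Integrable (⇑Zl) μ :=
      integrable_of_integrable_trim hmf (L1.integrable_coeFn Zl)
    have hZsμ : ∀ n, Integrable (⇑(Zs n)) μ := fun n =>
      integrable_of_integrable_trim hmf (L1.integrable_coeFn (Zs n))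
    set A : Ω → ℝ := μ[t.indicator (⇑Zl) | m] with hA
    set B : Ω → ℝ := fun ω => (μ[⇑Zl | m]) ω * q ω with hB
    set δ : ℕ → ℝ≥0∞ := fun n => eLpNorm (⇑(Zs n) - ⇑Zl) 1 μ with hδdef
    have key : ∀ n, eLpNorm (fun ω => A ω - B ω) 1 μ ≤ 2 * δ n := by
      intro n
      set An : Ω → ℝ := μ[t.indicator (⇑(Zs n)) | m]
      set Bn : Ω → ℝ := fun ω => (μ[⇑(Zs n) | m]) ω * q ω
      have hmemn : An =ᵐ[μ] Bn := hmem n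
      have step1 : eLpNorm (fun ω => A ω - An ω) 1 μ ≤ δ n := by
        have h1 : (fun ω => A ω - An ω)
            =ᵐ[μ] μ[t.indicator (⇑Zl) - t.indicator (⇑(Zs n)) | m] :=
          (condExp_sub (hZlμ.indicator ht) ((hZsμ n).indicator ht) m).symm
        rw [eLpNorm_congr_ae h1]
        refine le_trans (eLpNorm_one_condExp_le_eLpNorm _) ?_
        have h2 : (t.indicator (⇑Zl) - t.indicator (⇑(Zs n)))
            = t.indicator (⇑Zl - ⇑(Zs n)) := by
          funext ω; by_cases hω : ω ∈ t <;> simp [Set.indicator_apply, hω]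
        rw [h2]
        refine le_trans (eLpNorm_indicator_le _) ?_
        have h3 : (⇑Zl - ⇑(Zs n)) = -(⇑(Zs n) - ⇑Zl) := by ring
        rw [h3, eLpNorm_neg]
      have step2 : eLpNorm (fun ω => Bn ω - B ω) 1 μ ≤ δ n := by
        have h1 : ∀ᵐ ω ∂μ, ‖Bn ω - B ω‖
            ≤ ‖(μ[⇑(Zs n)|m]) ω - (μ[⇑Zl|m]) ω‖ := by
          filter_upwards [hq_bdd] with ω hω
          have : Bn ω - B ω = ((μ[⇑(Zs n)|m]) ω - (μ[⇑Zl|m]) ω) * q ω := by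
            simp only [Bn, B]; ring
          rw [this, norm_mul]
          exact mul_le_of_le_one_right (norm_nonneg _) hω
        refine le_trans (eLpNorm_mono_ae h1) ?_
        have h2 : (fun ω => (μ[⇑(Zs n)|m]) ω - (μ[⇑Zl|m]) ω)
            =ᵐ[μ] μ[⇑(Zs n) - ⇑Zl | m] := (condExp_sub (hZsμ n) hZlμ m).symm
        rw [eLpNorm_congr_ae h2]
        exact eLpNorm_one_condExp_le_eLpNorm _
      have tri : eLpNorm (fun ω => A ω - B ω) 1 μ
          ≤ eLpNorm (fun ω => A ω - An ω) 1 μ + eLpNorm (fun ω => Bn ω - B ω) 1 μ := by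
        have heq : (fun ω => A ω - B ω)
            =ᵐ[μ] fun ω => (A ω - An ω) + (Bn ω - B ω) := by
          filter_upwards [hmemn] with ω hω
          rw [hω]; ring
        rw [eLpNorm_congr_ae heq]
        have hmA : AEStronglyMeasurable (fun ω => A ω - An ω) μ :=
          ((stronglyMeasurable_condExp.mono hm).aestronglyMeasurable).sub
            ((stronglyMeasurable_condExp.mono hm).aestronglyMeasurable)
        have hmB : AEStronglyMeasurable (fun ω => Bn ω - B ω) μ := by
          refine AEStronglyMeasurable.sub ?_ ?_
          · exact ((stronglyMeasurable_condExp.mono hm).aestronglyMeasurable).mul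
              ((stronglyMeasurable_condExp.mono hm).aestronglyMeasurable)
          · exact ((stronglyMeasurable_condExp.mono hm).aestronglyMeasurable).mul
              ((stronglyMeasurable_condExp.mono hm).aestronglyMeasurable)
        exact eLpNorm_add_le hmA hmB le_rfl
      calc eLpNorm (fun ω => A ω - B ω) 1 μ
          ≤ eLpNorm (fun ω => A ω - An ω) 1 μ + eLpNorm (fun ω => Bn ω - B ω) 1 μ := tri
        _ ≤ δ n + δ n := add_le_add step1 step2
        _ = 2 * δ n := (two_mul _).symm
    have hδeq : ∀ n, δ n = ENNReal.ofReal ‖Zs n - Zl‖ := by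
      intro n
      have h1 : eLpNorm (⇑(Zs n - Zl)) 1 ν = eLpNorm (⇑(Zs n) - ⇑Zl) 1 ν :=
        eLpNorm_congr_ae (Lp.coeFn_sub _ _)
      have h2 : eLpNorm (⇑(Zs n) - ⇑Zl) 1 ν = eLpNorm (⇑(Zs n) - ⇑Zl) 1 μ :=
        eLpNorm_trim_ae hmf ((Lp.aestronglyMeasurable _).sub (Lp.aestronglyMeasurable _))
      rw [Lp.norm_def, ENNReal.ofReal_toReal (Lp.eLpNorm_ne_top _), h1, h2]
    have hδ0 : Tendsto δ atTop (𝓝 0) := by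
      have hnorm : Tendsto (fun n => ‖Zs n - Zl‖) atTop (𝓝 0) :=
        tendsto_iff_norm_sub_tendsto_zero.mp hlim
      have h := ENNReal.tendsto_ofReal hnorm
      have heq : δ = fun n => ENNReal.ofReal ‖Zs n - Zl‖ := funext hδeq
      rw [heq]
      simpa using h
    have h2δ0 : Tendsto (fun n => 2 * δ n) atTop (𝓝 0) := by
      have := ENNReal.Tendsto.const_mul (a := 2) hδ0 (Or.inr (by norm_num))
      simpa using this
    have h0 : eLpNorm (fun ω => A ω - B ω) 1 μ = 0 := by
      have hle : eLpNorm (fun ω => A ω - B ω) 1 μ ≤ 0 := ge_of_tendsto' h2δ0 key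
      exact le_antisymm hle (zero_le')
    have hmeas : AEStronglyMeasurable (fun ω => A ω - B ω) μ := by
      refine AEStronglyMeasurable.sub
        ((stronglyMeasurable_condExp.mono hm).aestronglyMeasurable) ?_
      exact ((stronglyMeasurable_condExp.mono hm).aestronglyMeasurable).mul
        ((stronglyMeasurable_condExp.mono hm).aestronglyMeasurable)
    have hAB : (fun ω => A ω - B ω) =ᵐ[μ] 0 :=
      (eLpNorm_eq_zero_iff hmeas one_ne_zero).mp h0
    show A =ᵐ[μ] B
    filter_upwards [hAB] with ω hω
    have : A ω - B ω = 0 := hω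
    linarith
  · -- respects a.e. equality
    intro Z W hZW hZν hPZ
    have hμeq : Z =ᵐ[μ] W := ae_eq_of_ae_eq_trim hZW
    have hind : t.indicator Z =ᵐ[μ] t.indicator W := by
      filter_upwards [hμeq] with ω hω
      by_cases h1 : ω ∈ t <;> simp [Set.indicator_apply, h1, hω]
    refine (condExp_congr_ae hind).symm.trans (hPZ.trans ?_)
    filter_upwards [condExp_congr_ae hμeq] with ω hω
    rw [hω]
/-- Identification of the control mean in the case-control setting:
`E[Y(0)] = E[(Y_U − e(1|X)·μ_T(X))/e(0|X)] = E[Y_U/e(0|X)] − E[e(1|X)·μ_T(X)/e(0|X)]`. -/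
theorem casecontrol_control_mean_identification
    {Ω 𝒳 : Type*} [MeasurableSpace Ω] [StandardBorelSpace Ω]
    [m𝒳 : MeasurableSpace 𝒳]
    (P : Measure Ω) [IsProbabilityMeasure P]
    (X : Ω → 𝒳) (hX : Measurable X)
    (D : Ω → Bool) (hD : Measurable D)
    (Y1 Y0 : Ω → ℝ) (hY1m : Measurable Y1) (hY0m : Measurable Y0)
    (hY1 : Integrable Y1 P) (hY0 : Integrable Y0 P)
    -- unconfoundedness: (Y(1),Y(0)) ⊥ D | X
    (hunconf : CondIndepFun (MeasurableSpace.comap X m𝒳) hX.comap_le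
      (fun ω => (Y1 ω, Y0 ω)) D P)
    (μT : 𝒳 → ℝ) (e : Bool → 𝒳 → ℝ)
    -- e(d|X) = P(D = d | X)
    (he : ∀ d : Bool,
      P[(fun ω => if D ω = d then (1:ℝ) else 0) | MeasurableSpace.comap X m𝒳]
      =ᵐ[P] fun ω => e d (X ω))
    -- μ_T(X) = E[Y(1)|X]
    (hμT : P[Y1 | MeasurableSpace.comap X m𝒳] =ᵐ[P] fun ω => μT (X ω))
    -- common support
    (c : ℝ) (hc : 0 < c) (hec : ∀ (d : Bool) (x : 𝒳), c < e d x) :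
    (∫ ω, Y0 ω ∂P
        = ∫ ω, ((if D ω then Y1 ω else Y0 ω) - e true (X ω) * μT (X ω)) / e false (X ω) ∂P)
    ∧ (∫ ω, Y0 ω ∂P
        = (∫ ω, (if D ω then Y1 ω else Y0 ω) / e false (X ω) ∂P)
          - ∫ ω, e true (X ω) * μT (X ω) / e false (X ω) ∂P) := by
  have hm : MeasurableSpace.comap X m𝒳 ≤ ‹MeasurableSpace Ω› := hX.comap_le
  set YU : Ω → ℝ := fun ω => if D ω then Y1 ω else Y0 ω with hYUdef
  set t : Bool → Set Ω := fun d => D ⁻¹' {d} with htdef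
  have ht : ∀ d, MeasurableSet (t d) := fun d => hD (measurableSet_singleton d)
  have hgind : ∀ d, (fun ω => if D ω = d then (1:ℝ) else 0)
      = (t d).indicator (fun _ => (1:ℝ)) := by
    intro d; funext ω
    by_cases h : D ω = d <;>
      simp [Set.indicator_apply, h, htdef, Set.mem_preimage, Set.mem_singleton_iff]
  set q : Bool → Ω → ℝ :=
    fun d => P[(t d).indicator (fun _ => (1:ℝ)) | MeasurableSpace.comap X m𝒳] with hqdef
  have he' : ∀ d, q d =ᵐ[P] fun ω => e d (X ω) := by
    intro d
    have := he d
    rwa [hgind d] at this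
  set r : Ω → ℝ := P[Y1 | MeasurableSpace.comap X m𝒳] with hrdef
  set s : Ω → ℝ := P[Y0 | MeasurableSpace.comap X m𝒳] with hsdef
  -- bounds on q
  have hq0 : ∀ d, (0 : Ω → ℝ) ≤ᵐ[P] q d := fun d =>
    condExp_nonneg (Filter.Eventually.of_forall fun ω =>
      Set.indicator_nonneg (fun _ _ => zero_le_one) ω)
  have hq1 : ∀ d, q d ≤ᵐ[P] fun _ => (1:ℝ) := by
    intro d
    have h := condExp_mono (μ := P) (m := MeasurableSpace.comap X m𝒳)
      (f := (t d).indicator fun _ => (1:ℝ)) (g := fun _ => (1:ℝ))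
      ((integrable_const (1:ℝ)).indicator (ht d)) (integrable_const (1:ℝ))
      (Filter.Eventually.of_forall fun ω =>
        Set.indicator_le_self' (fun _ _ => zero_le_one) ω)
    have hcc : P[(fun _ : Ω => (1:ℝ)) | MeasurableSpace.comap X m𝒳] = fun _ => (1:ℝ) :=
      condExp_const (μ := P) hm (1:ℝ)
    rwa [hcc] at h
  have hqbd : ∀ d, ∀ᵐ ω ∂P, ‖q d ω‖ ≤ 1 := by
    intro d
    filter_upwards [hq0 d, hq1 d] with ω h0 h1
    have h0' : (0:ℝ) ≤ q d ω := h0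
    rw [Real.norm_eq_abs, abs_le]
    exact ⟨by linarith, h1⟩
  -- conditional-independence pull-out
  have hf : Measurable (fun ω => (Y1 ω, Y0 ω)) := hY1m.prodMk hY0m
  have hindep' := (condIndepFun_iff_condExp_inter_preimage_eq_mul hf hD).mp hunconf
  have hfc : Measurable[MeasurableSpace.comap (fun ω => (Y1 ω, Y0 ω)) inferInstance]
      (fun ω => (Y1 ω, Y0 ω)) := measurable_iff_comap_le.mpr le_rfl
  have hY1c : StronglyMeasurable[MeasurableSpace.comap (fun ω => (Y1 ω, Y0 ω)) inferInstance]
      Y1 := (Measurable.stronglyMeasurable (by exact measurable_fst.comp hfc))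
  have hY0c : StronglyMeasurable[MeasurableSpace.comap (fun ω => (Y1 ω, Y0 ω)) inferInstance]
      Y0 := (Measurable.stronglyMeasurable (by exact measurable_snd.comp hfc))
  have hmul1 : P[(t true).indicator Y1 | MeasurableSpace.comap X m𝒳]
      =ᵐ[P] fun ω => r ω * q true ω :=
    condexp_indicator_mul_of_forall hm P hf (ht true)
      (fun u hu => hindep' u {true} hu (measurableSet_singleton true)) hY1 hY1c
  have hmul0 : P[(t false).indicator Y0 | MeasurableSpace.comap X m𝒳]
      =ᵐ[P] fun ω => s ω * q false ω :=
    condexp_indicator_mul_of_forall hm P hf (ht false)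
      (fun u hu => hindep' u {false} hu (measurableSet_singleton false)) hY0 hY0c
  -- the weight w
  set w : Ω → ℝ := fun ω => (max (q false ω) c)⁻¹ with hwdef
  have hw_sm : StronglyMeasurable[MeasurableSpace.comap X m𝒳] w :=
    ((stronglyMeasurable_condExp.measurable.max measurable_const).inv).stronglyMeasurable
  have hw_bd : ∀ ω, ‖w ω‖ ≤ c⁻¹ := by
    intro ω
    have h1 : (0:ℝ) < max (q false ω) c := lt_of_lt_of_le hc (le_max_right _ _)
    rw [Real.norm_eq_abs, abs_of_pos (inv_pos.2 h1)]
    exact inv_anti₀ hc (le_max_right _ _)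
  have hw_eq : w =ᵐ[P] fun ω => (e false (X ω))⁻¹ := by
    filter_upwards [he' false] with ω hω
    simp only [hwdef]
    rw [hω, max_eq_left (hec false (X ω)).le]
  have hq0w : ∀ᵐ ω ∂P, q false ω * w ω = 1 := by
    filter_upwards [he' false] with ω hω
    simp only [hwdef]
    rw [hω, max_eq_left (hec false (X ω)).le]
    exact mul_inv_cancel₀ (lt_trans hc (hec false (X ω))).ne'
  -- decomposition of YU
  have hYUdecomp : YU = (t true).indicator Y1 + (t false).indicator Y0 := by
    funext ω
    rcases Bool.eq_false_or_eq_true (D ω) with h | h <;>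
      simp [hYUdef, htdef, Set.indicator_apply, Set.mem_preimage, Set.mem_singleton_iff, h]
  have hYUint : Integrable YU P := by
    rw [hYUdecomp]; exact (hY1.indicator (ht true)).add (hY0.indicator (ht false))
  have hcYU : P[YU | MeasurableSpace.comap X m𝒳]
      =ᵐ[P] fun ω => r ω * q true ω + s ω * q false ω := by
    rw [hYUdecomp]
    refine (condExp_add (hY1.indicator (ht true)) (hY0.indicator (ht false)) _).trans ?_
    filter_upwards [hmul1, hmul0] with ω h1 h0
    simp only [Pi.add_apply, h1, h0]
  -- q true * r is M-measurable and integrable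
  have hqr_int : Integrable (fun ω => q true ω * r ω) P :=
    integrable_condExp.bdd_mul
      ((stronglyMeasurable_condExp.mono hm).aestronglyMeasurable) (hqbd true)
  have hqr_ce : P[(fun ω => q true ω * r ω) | MeasurableSpace.comap X m𝒳]
      = fun ω => q true ω * r ω :=
    condExp_of_stronglyMeasurable hm
      (stronglyMeasurable_condExp.mul stronglyMeasurable_condExp) hqr_int
  -- H and its conditional expectation
  set H : Ω → ℝ := fun ω => YU ω - q true ω * r ω with hHdef
  have hHint : Integrable H P := hYUint.sub hqr_int
  have hcH : P[H | MeasurableSpace.comap X m𝒳] =ᵐ[P] fun ω => s ω * q false ω := by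
    refine (condExp_sub hYUint hqr_int _).trans ?_
    filter_upwards [hcYU] with ω h
    simp only [Pi.sub_apply, h, hqr_ce]
    ring
  -- core integral computation
  have hwH_int : Integrable (fun ω => w ω * H ω) P :=
    hHint.bdd_mul ((hw_sm.mono hm).aestronglyMeasurable)
      (Filter.Eventually.of_forall hw_bd)
  have hpull : P[(fun ω => w ω * H ω) | MeasurableSpace.comap X m𝒳]
      =ᵐ[P] fun ω => w ω * (P[H | MeasurableSpace.comap X m𝒳]) ω := by
    have h := condExp_mul_of_stronglyMeasurable_left hw_sm hwH_int hHint
    exact h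
  have hkey : ∫ ω, w ω * H ω ∂P = ∫ ω, Y0 ω ∂P := by
    calc ∫ ω, w ω * H ω ∂P
        = ∫ ω, (P[(fun ω => w ω * H ω) | MeasurableSpace.comap X m𝒳]) ω ∂P :=
          (integral_condExp hm).symm
      _ = ∫ ω, s ω ∂P := by
          refine integral_congr_ae ?_
          filter_upwards [hpull, hcH, hq0w] with ω h1 h2 h3
          rw [h1, h2]
          calc w ω * (s ω * q false ω) = s ω * (q false ω * w ω) := by ring
            _ = s ω := by rw [h3, mul_one]
      _ = ∫ ω, Y0 ω ∂P := integral_condExp hm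
  -- part 1
  have hFeq : (fun ω => (YU ω - e true (X ω) * μT (X ω)) / e false (X ω))
      =ᵐ[P] fun ω => w ω * H ω := by
    filter_upwards [he' true, hμT, hw_eq] with ω h1 hr hw
    simp only [hHdef]
    rw [div_eq_mul_inv, ← hw, ← h1]
    have hrω : r ω = μT (X ω) := hr
    rw [← hrω]
    ring
  have part1 : ∫ ω, Y0 ω ∂P
      = ∫ ω, (YU ω - e true (X ω) * μT (X ω)) / e false (X ω) ∂P := by
    rw [integral_congr_ae hFeq, hkey]
  -- part 2 : integrability of the two pieces
  have hA_int : Integrable (fun ω => YU ω / e false (X ω)) P := by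
    refine Integrable.congr (hYUint.bdd_mul
      ((hw_sm.mono hm).aestronglyMeasurable) (Filter.Eventually.of_forall hw_bd)) ?_
    filter_upwards [hw_eq] with ω h
    rw [div_eq_mul_inv, ← h]; ring
  have hB_int : Integrable (fun ω => e true (X ω) * μT (X ω) / e false (X ω)) P := by
    refine Integrable.congr (hqr_int.bdd_mul
      ((hw_sm.mono hm).aestronglyMeasurable) (Filter.Eventually.of_forall hw_bd)) ?_
    filter_upwards [he' true, hμT, hw_eq] with ω h1 hr hw
    have hrω : r ω = μT (X ω) := hr
    rw [div_eq_mul_inv, ← hw, ← h1, ← hrω]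
    ring
  refine ⟨part1, ?_⟩
  have hsplit : ∀ ω : Ω, (YU ω - e true (X ω) * μT (X ω)) / e false (X ω)
      = YU ω / e false (X ω) - e true (X ω) * μT (X ω) / e false (X ω) :=
    fun ω => sub_div _ _ _
  calc ∫ ω, Y0 ω ∂P
      = ∫ ω, (YU ω - e true (X ω) * μT (X ω)) / e false (X ω) ∂P := part1
    _ = ∫ ω, (YU ω / e false (X ω) - e true (X ω) * μT (X ω) / e false (X ω)) ∂P := by
        simp_rw [hsplit]
    _ = (∫ ω, YU ω / e false (X ω) ∂P)
        - ∫ ω, e true (X ω) * μT (X ω) / e false (X ω) ∂P :=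
        integral_sub hA_int hB_int
end
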